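/- arXiv:1312.2273 — 6 statements merged into one kernel-verified Lean document; each statement's English description precedes it below -/
import Mathlib

section
/- Morita equivalence of groupoids is an equivalence relation: it is reflexive, symmetric, and transitive. In particular, given Morita morphisms R → X, R → Y and S → Y, S → Z, the fibre-product groupoid R ×_Y S (with objects R₀ ×_{Y₀} S₀ and morphisms R₁ ×_{Y₁} S₁) admits Morita morphisms to X and to Z. -/
open CategoryTheory

universe u

/-- A Morita morphism of groupoids: a fully faithful functor surjective on objects. -/
def MoritaMorphism {C : Type u} {D : Type u} [Groupoid C] [Groupoid D] (F : C ⥤ D) : Prop :=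
  F.Full ∧ F.Faithful ∧ Function.Surjective F.obj

/-- Morita equivalence of (bundled) groupoids: there is a third groupoid with Morita
morphisms to both. -/
def MoritaEquiv (C D : Grpd.{u, u}) : Prop :=
  ∃ Z : Grpd.{u, u}, (∃ F : (Z : Type u) ⥤ (C : Type u), MoritaMorphism F) ∧
    ∃ G : (Z : Type u) ⥤ (D : Type u), MoritaMorphism G

theorem MoritaMorphism.id {C : Type u} [Groupoid C] : MoritaMorphism (𝟭 C) :=
  ⟨inferInstance, inferInstance, fun c => ⟨c, rfl⟩⟩

theorem MoritaMorphism.comp {C D E : Type u} [Groupoid C] [Groupoid D] [Groupoid E]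
    {F : C ⥤ D} {G : D ⥤ E} (hF : MoritaMorphism F) (hG : MoritaMorphism G) :
    MoritaMorphism (F ⋙ G) := by
  obtain ⟨hF1, hF2, hF3⟩ := hF
  obtain ⟨hG1, hG2, hG3⟩ := hG
  refine ⟨?_, ?_, hG3.comp hF3⟩
  · exact @Functor.Full.comp _ _ _ _ _ _ F G hF1 hG1
  · exact @Functor.Faithful.comp _ _ _ _ _ _ F G hF2 hG2

section FP

variable {R S Y : Type u} [Groupoid.{u} R] [Groupoid.{u} S] [Groupoid.{u} Y]
  (F' : R ⥤ Y) (G : S ⥤ Y)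

/-- The strict fibre product of groupoids. -/
structure FP : Type u where
  r : R
  s : S
  h : F'.obj r = G.obj s

variable {F' G}

/-- Morphisms in the fibre product groupoid. -/
@[ext]
structure FPHom (a b : FP F' G) : Type u where
  f : a.r ⟶ b.r
  g : a.s ⟶ b.s
  w : F'.map f = eqToHom a.h ≫ G.map g ≫ eqToHom b.h.symm

instance : Category (FP F' G) where
  Hom := FPHom
  id a := ⟨𝟙 _, 𝟙 _, by simp⟩
  comp p q := ⟨p.f ≫ q.f, p.g ≫ q.g, by simp [p.w, q.w]⟩

@[simp] theorem FPHom.comp_f {a b c : FP F' G} (p : a ⟶ b) (q : b ⟶ c) :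
    (p ≫ q).f = p.f ≫ q.f := rfl

@[simp] theorem FPHom.comp_g {a b c : FP F' G} (p : a ⟶ b) (q : b ⟶ c) :
    (p ≫ q).g = p.g ≫ q.g := rfl

@[simp] theorem FPHom.id_f (a : FP F' G) : FPHom.f (𝟙 a) = 𝟙 a.r := rfl

@[simp] theorem FPHom.id_g (a : FP F' G) : FPHom.g (𝟙 a) = 𝟙 a.s := rfl

instance : Groupoid (FP F' G) where
  inv p := ⟨Groupoid.inv p.f, Groupoid.inv p.g, by
    simp [Groupoid.inv_eq_inv, Functor.map_inv, p.w]⟩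
  inv_comp p := by apply FPHom.ext <;> simp [Groupoid.inv_eq_inv]
  comp_inv p := by apply FPHom.ext <;> simp [Groupoid.inv_eq_inv]

variable (F' G)

/-- First projection from the fibre product. -/
def FP.fst : FP F' G ⥤ R where
  obj a := a.r
  map p := p.f

/-- Second projection from the fibre product. -/
def FP.snd : FP F' G ⥤ S where
  obj a := a.s
  map p := p.g

variable {F' G}

theorem morita_fst (hG : MoritaMorphism G) : MoritaMorphism (FP.fst F' G) := by
  obtain ⟨hG1, hG2, hG3⟩ := hG
  refine ⟨⟨fun {a b} f => ?_⟩, ⟨fun {a b} p q hpq => ?_⟩, fun r => ?_⟩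
  · obtain ⟨g, hg⟩ := hG1.map_surjective (eqToHom a.h.symm ≫ F'.map f ≫ eqToHom b.h)
    exact ⟨⟨f, g, by rw [hg]; simp; erw [eqToHom_trans, eqToHom_refl, Category.comp_id]; rfl⟩, rfl⟩
  · have h1 : G.map p.g = eqToHom a.h.symm ≫ F'.map p.f ≫ eqToHom b.h := by
      rw [p.w]; simp
    have h2 : G.map q.g = eqToHom a.h.symm ≫ F'.map q.f ≫ eqToHom b.h := by
      rw [q.w]; simp
    have hfg : p.f = q.f := hpq
    exact FPHom.ext hfg (hG2.map_injective (by rw [h1, h2, hfg]))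
  · obtain ⟨s, hs⟩ := hG3 (F'.obj r)
    exact ⟨⟨r, s, hs.symm⟩, rfl⟩

theorem morita_snd (hF' : MoritaMorphism F') : MoritaMorphism (FP.snd F' G) := by
  obtain ⟨h1, h2, h3⟩ := hF'
  refine ⟨⟨fun {a b} g => ?_⟩, ⟨fun {a b} p q hpq => ?_⟩, fun s => ?_⟩
  · obtain ⟨f, hf⟩ := h1.map_surjective (eqToHom a.h ≫ G.map g ≫ eqToHom b.h.symm)
    exact ⟨⟨f, g, hf⟩, rfl⟩
  · have hfg : p.g = q.g := hpq
    exact FPHom.ext (h2.map_injective (by rw [p.w, q.w, hfg])) hfg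
  · obtain ⟨r, hr⟩ := h3 (G.obj s)
    exact ⟨⟨r, s, hr⟩, rfl⟩

end FP

/-- Morita equivalence is an equivalence relation; moreover, given Morita
morphisms R → X, R → Y and S → Y, S → Z, the fibre-product groupoid `R ×_Y S`
(whose objects are `R₀ ×_{Y₀} S₀`) admits Morita morphisms to X and to Z. -/
theorem moritaEquiv_equivalence :
    Equivalence MoritaEquiv.{u} ∧
    ∀ (R S X Y Z : Grpd.{u, u}) (F : (R : Type u) ⥤ (X : Type u))
      (F' : (R : Type u) ⥤ (Y : Type u)) (G : (S : Type u) ⥤ (Y : Type u))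
      (G' : (S : Type u) ⥤ (Z : Type u)),
      MoritaMorphism F → MoritaMorphism F' → MoritaMorphism G → MoritaMorphism G' →
      ∃ (W : Grpd.{u, u}) (FX : (W : Type u) ⥤ (X : Type u))
        (GZ : (W : Type u) ⥤ (Z : Type u)),
        MoritaMorphism FX ∧ MoritaMorphism GZ ∧
        Nonempty ((W : Type u) ≃
          (Σ' (r : (R : Type u)) (s : (S : Type u)), F'.obj r = G.obj s)) := by
  constructor
  · refine ⟨fun C => ⟨C, ⟨𝟭 C, MoritaMorphism.id⟩, ⟨𝟭 C, MoritaMorphism.id⟩⟩,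
      fun h => ?_, fun h1 h2 => ?_⟩
    · obtain ⟨W, hW1, hW2⟩ := h
      exact ⟨W, hW2, hW1⟩
    · obtain ⟨R, ⟨F, hF⟩, ⟨F', hF'⟩⟩ := h1
      obtain ⟨S, ⟨G, hG⟩, ⟨G', hG'⟩⟩ := h2
      exact ⟨Grpd.of (FP F' G),
        ⟨FP.fst F' G ⋙ F, (morita_fst hG).comp hF⟩,
        ⟨FP.snd F' G ⋙ G', (morita_snd hF').comp hG'⟩⟩
  · intro R S X Y Z F F' G G' hF hF' hG hG'
    refine ⟨Grpd.of (FP F' G), FP.fst F' G ⋙ F, FP.snd F' G ⋙ G',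
      (morita_fst hG).comp hF, (morita_snd hF').comp hG', ⟨?_⟩⟩
    exact ⟨fun a => ⟨a.r, a.s, a.h⟩, fun p => ⟨p.1, p.2.1, p.2.2⟩,
      fun a => rfl, fun p => rfl⟩
end

section
/- Let f : X → Y be a Morita morphism of groupoids and let P be a torsor for Y over a set S with anchor map a : P → Y₀. Then the fibre product X₀ ×_{f₀, Y₀, a} P, with anchor map the first projection and action σ·(x,p) = (x, f₁(σ)·p), is a torsor for X over S. -/
open CategoryTheory

universe u v w

/-- A torsor for a groupoid `X` over a set `S`: a set `P` with a projection to `S`, an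
anchor map to the objects of `X`, and a fibrewise action of the morphisms of `X`
(compatible with identities and composition, preserving the projection) which is free
and transitive on the fibres of the projection. -/
structure GroupoidTorsor (X : Type u) [Groupoid X] (S : Type v) (P : Type w) where
  proj : P → S
  anchor : P → X
  act : ∀ {a b : X}, (a ⟶ b) → ∀ p : P, anchor p = a → P
  anchor_act : ∀ {a b : X} (m : a ⟶ b) (p : P) (h : anchor p = a), anchor (act m p h) = b
  proj_act : ∀ {a b : X} (m : a ⟶ b) (p : P) (h : anchor p = a), proj (act m p h) = proj p
  act_id : ∀ p : P, act (𝟙 (anchor p)) p rfl = p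
  act_comp : ∀ {a b c : X} (m : a ⟶ b) (n : b ⟶ c) (p : P) (h : anchor p = a),
      act n (act m p h) (anchor_act m p h) = act (m ≫ n) p h
  free_transitive : ∀ p q : P, proj p = proj q → ∃! m : anchor p ⟶ anchor q, act m p rfl = q

/-- Acting by a morphism conjugated by `eqToHom`s is the same as acting by the morphism. -/
lemma GroupoidTorsor.act_conj {Y : Type u} [Groupoid Y] {S : Type v} {P : Type w}
    (T : GroupoidTorsor Y S P) {a b a' b' : Y} (ha : a = a') (hb : b = b')
    (m : a ⟶ b) (p : P) (h : T.anchor p = a) (h' : T.anchor p = a') :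
    T.act (eqToHom ha.symm ≫ m ≫ eqToHom hb) p h' = T.act m p h := by
  subst ha; subst hb
  simp only [eqToHom_refl, Category.id_comp, Category.comp_id]

/-- Acting by an identity (at a point equal to the anchor) is trivial. -/
lemma GroupoidTorsor.act_id' {Y : Type u} [Groupoid Y] {S : Type v} {P : Type w}
    (T : GroupoidTorsor Y S P) {a : Y} (p : P) (h : T.anchor p = a) :
    T.act (𝟙 a) p h = p := by
  subst h; exact T.act_id p

/-- pulling back a torsor along a Morita morphism.  If `F : X ⥤ Y` is a
Morita morphism and `P` is a `Y`-torsor over `S`, then the fibre product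
`X₀ ×_{F, Y₀, anchor} P`, with anchor the first projection and action
`σ·(x,p) = (target σ, F(σ)·p)`, is an `X`-torsor over `S`. -/
theorem morita_pullback_torsor {X Y : Type u} [Groupoid X] [Groupoid Y]
    {S : Type v} {P : Type w} (F : X ⥤ Y)
    (hfull : F.Full) (hfaithful : F.Faithful) (hsurj : Function.Surjective F.obj)
    (T : GroupoidTorsor Y S P) :
    ∃ T' : GroupoidTorsor X S {q : X × P // F.obj q.1 = T.anchor q.2},
      (∀ q, T'.anchor q = q.1.1) ∧
      (∀ q, T'.proj q = T.proj q.1.2) ∧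
      (∀ {a b : X} (σ : a ⟶ b) (q : {q : X × P // F.obj q.1 = T.anchor q.2})
        (h : T'.anchor q = a) (h2 : T.anchor q.1.2 = F.obj a),
        (T'.act σ q h).1.2 = T.act (F.map σ) q.1.2 h2) := by
  refine ⟨{
    proj := fun q => T.proj q.1.2
    anchor := fun q => q.1.1
    act := fun {a b} σ q h =>
      ⟨(b, T.act (F.map σ) q.1.2 (h ▸ q.2.symm)),
        (T.anchor_act (F.map σ) q.1.2 (h ▸ q.2.symm)).symm⟩
    anchor_act := fun σ q h => rfl
    proj_act := fun σ q h => T.proj_act _ _ _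
    act_id := ?_
    act_comp := ?_
    free_transitive := ?_ }, fun q => rfl, fun q => rfl, fun σ q h h2 => rfl⟩
  · intro q
    refine Subtype.ext (Prod.ext rfl ?_)
    show T.act (F.map (𝟙 q.1.1)) q.1.2 _ = q.1.2
    have : F.map (𝟙 q.1.1) = eqToHom rfl ≫ 𝟙 (F.obj q.1.1) ≫ eqToHom rfl := by simp
    rw [this]
    rw [T.act_conj rfl rfl (𝟙 (F.obj q.1.1)) q.1.2 q.2.symm]
    exact T.act_id' q.1.2 q.2.symm
  · intro a b c m n q h
    refine Subtype.ext (Prod.ext rfl ?_)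
    show T.act (F.map n) (T.act (F.map m) q.1.2 _) _ = T.act (F.map (m ≫ n)) q.1.2 _
    rw [F.map_comp]
    exact T.act_comp (F.map m) (F.map n) q.1.2 _
  · intro q r hpr
    obtain ⟨m, hm, hu⟩ := T.free_transitive q.1.2 r.1.2 hpr
    obtain ⟨σ, hσ⟩ := hfull.map_surjective (eqToHom q.2 ≫ m ≫ eqToHom r.2.symm)
    refine ⟨σ, ?_, ?_⟩
    · refine Subtype.ext (Prod.ext rfl ?_)
      show T.act (F.map σ) q.1.2 _ = r.1.2
      rw [hσ, T.act_conj q.2.symm r.2.symm m q.1.2 rfl]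
      exact hm
    · intro σ' hσ'
      apply hfaithful.map_injective
      rw [hσ]
      have h2 : T.act (F.map σ') q.1.2 q.2.symm = r.1.2 := by
        have := congrArg (fun z => z.1.2) hσ'
        exact this
      have h3 : T.act (eqToHom q.2.symm ≫ F.map σ' ≫ eqToHom r.2) q.1.2 rfl = r.1.2 := by
        rw [T.act_conj q.2 r.2 (F.map σ') q.1.2 q.2.symm rfl]
        exact h2
      have h4 := hu _ h3
      calc F.map σ' = eqToHom q.2 ≫ (eqToHom q.2.symm ≫ F.map σ' ≫ eqToHom r.2) ≫ eqToHom r.2.symm := by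
            simp
        _ = eqToHom q.2 ≫ m ≫ eqToHom r.2.symm := by rw [h4]
end

section
/- Two extensions of a group H by an abelian H-module A (inducing the given module structure) are isomorphic as extensions if and only if the 2-cocycles obtained from set-theoretic sections are cohomologous; this establishes a bijection between equivalence classes of such extensions and H²(H, A). -/
universe u

namespace Ext10

@[ext]
structure C (A H : Type u) where
  a : A
  s : H

variable {H A : Type u} [Group H] [CommGroup A] (μ : H →* MulAut A) (h : H → H → A)
variable (hh : ∀ α σ τ : H, h (α * σ) τ * h α σ = μ α (h σ τ) * h α (σ * τ))

theorem h1t (hh : ∀ α σ τ : H, h (α * σ) τ * h α σ = μ α (h σ τ) * h α (σ * τ)) (τ : H) : h 1 τ = h 1 1 := by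
  have := hh 1 1 τ
  simp only [one_mul, map_one, MulAut.one_apply] at this
  exact (mul_left_cancel this).symm

theorem hs1 (hh : ∀ α σ τ : H, h (α * σ) τ * h α σ = μ α (h σ τ) * h α (σ * τ)) (σ : H) : h σ 1 = μ σ (h 1 1) := by
  have := hh σ 1 1
  simp only [mul_one, one_mul] at this
  exact mul_right_cancel this

theorem h3 (hh : ∀ α σ τ : H, h (α * σ) τ * h α σ = μ α (h σ τ) * h α (σ * τ)) (ρ : H) : h 1 1 * h ρ ρ⁻¹ = μ ρ (h ρ⁻¹ ρ) * μ ρ (h 1 1) := by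
  have := hh ρ ρ⁻¹ ρ
  rw [mul_inv_cancel, inv_mul_cancel, h1t μ h hh ρ, hs1 μ h hh ρ] at this
  exact this

def grpC (hh : ∀ α σ τ : H, h (α * σ) τ * h α σ = μ α (h σ τ) * h α (σ * τ)) : Group (C A H) where
  mul x y := ⟨x.a * μ x.s y.a * h x.s y.s, x.s * y.s⟩
  one := ⟨(h 1 1)⁻¹, 1⟩
  inv x := ⟨(h 1 1)⁻¹ * (h x.s⁻¹ x.s)⁻¹ * (μ x.s⁻¹ x.a)⁻¹, x.s⁻¹⟩
  mul_assoc x y z := by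
    ext
    · show (x.a * μ x.s y.a * h x.s y.s) * μ (x.s * y.s) z.a * h (x.s * y.s) z.s
        = x.a * μ x.s (y.a * μ y.s z.a * h y.s z.s) * h x.s (y.s * z.s)
      have key : h x.s (y.s * z.s) = (μ x.s (h y.s z.s))⁻¹ * (h (x.s * y.s) z.s * h x.s y.s) := by
        rw [hh x.s y.s z.s]; group
      rw [key, map_mul μ, MulAut.mul_apply, map_mul, map_mul]
      simp [mul_assoc, mul_comm, mul_left_comm]
    · exact mul_assoc x.s y.s z.s
  one_mul x := by
    ext
    · show (h 1 1)⁻¹ * μ 1 x.a * h 1 x.s = x.a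
      rw [h1t μ h hh x.s]; simp
    · exact one_mul x.s
  mul_one x := by
    ext
    · show x.a * μ x.s (h 1 1)⁻¹ * h x.s 1 = x.a
      rw [hs1 μ h hh x.s]; simp
    · exact mul_one x.s
  inv_mul_cancel x := by
    ext
    · show ((h 1 1)⁻¹ * (h x.s⁻¹ x.s)⁻¹ * (μ x.s⁻¹ x.a)⁻¹) * μ x.s⁻¹ x.a * h x.s⁻¹ x.s = (h 1 1)⁻¹
      simp [mul_assoc]
    · exact inv_mul_cancel x.s

end Ext10

namespace Ext10x
open Ext10

theorem part2 {H A : Type u} [Group H] [CommGroup A] (μ : H →* MulAut A)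
    (h : H → H → A) (hh : ∀ α σ τ : H, h (α * σ) τ * h α σ = μ α (h σ τ) * h α (σ * τ)) :
    ∃ (E'' : Type u) (instE'' : Group E''), by
      letI := instE''
      exact ∃ (i'' : A →* E'') (π'' : E'' →* H) (j'' : H → E''),
        Function.Injective i'' ∧ Function.Surjective π'' ∧
        (∀ e : E'', π'' e = 1 ↔ e ∈ i''.range) ∧
        (∀ (x : H) (e : E'') (a : A), π'' e = x → i'' (μ x a) = e * i'' a * e⁻¹) ∧
        (∀ x : H, π'' (j'' x) = x) ∧
        ∀ σ τ : H, i'' (h σ τ) = j'' σ * j'' τ * (j'' (σ * τ))⁻¹ := by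
  refine ⟨C A H, grpC μ h hh, ?_⟩
  letI := grpC μ h hh
  have mulD : ∀ x y : C A H, x * y = ⟨x.a * μ x.s y.a * h x.s y.s, x.s * y.s⟩ := fun _ _ => rfl
  have invD : ∀ x : C A H, x⁻¹ = ⟨(h 1 1)⁻¹ * (h x.s⁻¹ x.s)⁻¹ * (μ x.s⁻¹ x.a)⁻¹, x.s⁻¹⟩ :=
    fun _ => rfl
  have key2 : ∀ ρ : H, h ρ ρ⁻¹ = (h 1 1)⁻¹ * (μ ρ (h ρ⁻¹ ρ) * μ ρ (h 1 1)) := by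
    intro ρ
    rw [← h3 μ h hh ρ]; group
  refine ⟨MonoidHom.mk' (fun a => ⟨a * (h 1 1)⁻¹, 1⟩) ?_,
    MonoidHom.mk' (fun x => x.s) (fun x y => rfl), fun x => ⟨1, x⟩, ?_, ?_, ?_, ?_, ?_, ?_⟩
  · intro a b
    rw [mulD]
    dsimp only
    rw [C.mk.injEq]
    refine ⟨?_, (one_mul 1).symm⟩
    rw [h1t μ h hh 1]
    simp [mul_assoc, mul_comm, mul_left_comm]
  · intro a b hab
    simpa using congrArg C.a hab
  · intro x
    exact ⟨⟨1, x⟩, rfl⟩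
  · intro e
    constructor
    · intro he
      refine ⟨e.a * h 1 1, ?_⟩
      have he' : e.s = 1 := he
      simp only [MonoidHom.mk'_apply]
      rw [C.mk.injEq]
      exact ⟨by simp, he'.symm⟩
    · rintro ⟨a, rfl⟩
      rfl
  · intro x e a he
    have he' : e.s = x := he
    subst he'
    simp only [MonoidHom.mk'_apply]
    rw [mulD, invD]
    dsimp only
    rw [mulD]
    dsimp only
    rw [C.mk.injEq]
    constructor
    · rw [mul_one, hs1 μ h hh e.s, key2 e.s]
      simp only [map_mul, map_inv, MulAut.apply_inv_self]
      simp [mul_assoc, mul_comm, mul_left_comm]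
    · simp
  · intro x; rfl
  · intro σ τ
    simp only [MonoidHom.mk'_apply]
    rw [mulD, invD]
    dsimp only
    rw [mulD]
    dsimp only
    rw [C.mk.injEq]
    constructor
    · rw [key2 (σ * τ)]
      simp only [map_mul, map_inv, map_one, MulAut.apply_inv_self, inv_one, mul_one, one_mul]
      simp [mul_assoc, mul_comm, mul_left_comm]
    · simp [mul_inv_cancel]
end Ext10x

/-- two extensions of `H` by the abelian `H`-module `A` (inducing the given
module structure) are isomorphic as extensions iff the 2-cocycles obtained from
set-theoretic sections are cohomologous; moreover every 2-cocycle arises from some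
extension with a section.  Together this gives the bijection between equivalence classes
of extensions and `H²(H, A)`. -/
theorem extensions_iso_iff_cohomologous {H A E E' : Type u} [Group H] [CommGroup A]
    [Group E] [Group E'] (μ : H →* MulAut A)
    -- first extension
    (i : A →* E) (π : E →* H)
    (hi : Function.Injective i) (hπ : Function.Surjective π)
    (hexact : ∀ e : E, π e = 1 ↔ e ∈ i.range)
    (haction : ∀ (h : H) (e : E) (a : A), π e = h → i (μ h a) = e * i a * e⁻¹)
    -- second extension
    (i' : A →* E') (π' : E' →* H)
    (hi' : Function.Injective i') (hπ' : Function.Surjective π')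
    (hexact' : ∀ e : E', π' e = 1 ↔ e ∈ i'.range)
    (haction' : ∀ (h : H) (e : E') (a : A), π' e = h → i' (μ h a) = e * i' a * e⁻¹)
    -- sections and the associated 2-cocycles
    (j : H → E) (hj : ∀ h, π (j h) = h)
    (j' : H → E') (hj' : ∀ h, π' (j' h) = h)
    (f f' : H → H → A)
    (hf : ∀ σ τ : H, i (f σ τ) = j σ * j τ * (j (σ * τ))⁻¹)
    (hf' : ∀ σ τ : H, i' (f' σ τ) = j' σ * j' τ * (j' (σ * τ))⁻¹) :
    ((∃ φ : E ≃* E', (∀ a : A, φ (i a) = i' a) ∧ ∀ e : E, π' (φ e) = π e) ↔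
      (∃ g : H → A, ∀ σ τ : H, f σ τ = f' σ τ * g σ * (g (σ * τ))⁻¹ * μ σ (g τ))) ∧
    -- surjectivity of the correspondence: every 2-cocycle comes from an extension
    ∀ h : H → H → A, (∀ α σ τ : H, h (α * σ) τ * h α σ = μ α (h σ τ) * h α (σ * τ)) →
      ∃ (E'' : Type u) (instE'' : Group E''), by
        letI := instE''
        exact ∃ (i'' : A →* E'') (π'' : E'' →* H) (j'' : H → E''),
          Function.Injective i'' ∧ Function.Surjective π'' ∧
          (∀ e : E'', π'' e = 1 ↔ e ∈ i''.range) ∧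
          (∀ (x : H) (e : E'') (a : A), π'' e = x → i'' (μ x a) = e * i'' a * e⁻¹) ∧
          (∀ x : H, π'' (j'' x) = x) ∧
          ∀ σ τ : H, i'' (h σ τ) = j'' σ * j'' τ * (j'' (σ * τ))⁻¹ := by
  have k'2 : ∀ (σ : H) (a : A), j' σ * i' a = i' (μ σ a) * j' σ := by
    intro σ a
    rw [haction' σ (j' σ) a (hj' σ)]; group
  have k'3 : ∀ σ τ : H, j' σ * j' τ = i' (f' σ τ) * j' (σ * τ) := by
    intro σ τ; rw [hf']; group
  have kE2 : ∀ (σ : H) (a : A), j σ * i a = i (μ σ a) * j σ := by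
    intro σ a
    rw [haction σ (j σ) a (hj σ)]; group
  have kE3 : ∀ σ τ : H, j σ * j τ = i (f σ τ) * j (σ * τ) := by
    intro σ τ; rw [hf]; group
  constructor
  · constructor
    · -- forward direction
      rintro ⟨φ, hφi, hφπ⟩
      have hrange : ∀ σ : H, φ (j σ) * (j' σ)⁻¹ ∈ i'.range := by
        intro σ
        rw [← hexact', map_mul, map_inv, hφπ, hj, hj', mul_inv_cancel]
      choose g hg using fun σ => MonoidHom.mem_range.mp (hrange σ)
      have k1 : ∀ σ, φ (j σ) = i' (g σ) * j' σ := by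
        intro σ; rw [hg]; group
      refine ⟨g, fun σ τ => ?_⟩
      have hE : i (f σ τ) * j (σ * τ) = j σ * j τ := by rw [hf]; group
      have hE' : i' (f σ τ) * (i' (g (σ * τ)) * j' (σ * τ))
          = (i' (g σ) * j' σ) * (i' (g τ) * j' τ) := by
        rw [← k1, ← k1, ← k1, ← hφi, ← map_mul, hE, map_mul]
      rw [show (i' (g σ) * j' σ) * (i' (g τ) * j' τ)
            = i' (g σ) * (j' σ * i' (g τ)) * j' τ by group, k'2,
          show i' (g σ) * (i' (μ σ (g τ)) * j' σ) * j' τ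
            = i' (g σ) * i' (μ σ (g τ)) * (j' σ * j' τ) by group, k'3] at hE'
      rw [← mul_assoc, ← mul_assoc] at hE'
      have hA0 := mul_right_cancel hE'
      rw [← map_mul, ← map_mul, ← map_mul] at hA0
      have hA' := hi' hA0
      rw [show f σ τ = f σ τ * g (σ * τ) * (g (σ * τ))⁻¹ by group, hA']
      simp [mul_assoc, mul_comm, mul_left_comm]
    · -- backward direction
      rintro ⟨g, hg⟩
      have hdec : ∀ e : E, ∃ a : A, e = i a * j (π e) := by
        intro e
        have h1 : π (e * (j (π e))⁻¹) = 1 := by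
          rw [map_mul, map_inv, hj, mul_inv_cancel]
        obtain ⟨a, ha⟩ := (hexact _).mp h1
        exact ⟨a, by rw [ha]; group⟩
      choose aOf haOf using hdec
      have huniq : ∀ (e : E) (a : A), e = i a * j (π e) → aOf e = a := by
        intro e a he
        have h2 : i a * j (π e) = i (aOf e) * j (π e) := he.symm.trans (haOf e)
        exact (hi (mul_right_cancel h2)).symm
      have hdec' : ∀ e : E', ∃ a : A, e = i' a * j' (π' e) := by
        intro e
        have h1 : π' (e * (j' (π' e))⁻¹) = 1 := by
          rw [map_mul, map_inv, hj', mul_inv_cancel]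
        obtain ⟨a, ha⟩ := (hexact' _).mp h1
        exact ⟨a, by rw [ha]; group⟩
      have c1E : i (f 1 1) = j 1 := by
        have := hf 1 1; rw [mul_one] at this; rw [this]; group
      have c1E' : i' (f' 1 1) = j' 1 := by
        have := hf' 1 1; rw [mul_one] at this; rw [this]; group
      have hg1 : g 1 = (f' 1 1)⁻¹ * f 1 1 := by
        have := hg 1 1
        simp only [map_one, MulAut.one_apply, one_mul, inv_mul_cancel_right] at this
        rw [this]; group
      -- the homomorphism
      set φf : E → E' := fun e => i' (aOf e * g (π e)) * j' (π e) with hφf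
      have hmul : ∀ e₁ e₂ : E, φf (e₁ * e₂) = φf e₁ * φf e₂ := by
        intro e₁ e₂
        have hprod : e₁ * e₂ = i (aOf e₁ * μ (π e₁) (aOf e₂) * f (π e₁) (π e₂)) * j (π e₁ * π e₂) := by
          conv_lhs => rw [haOf e₁, haOf e₂]
          calc (i (aOf e₁) * j (π e₁)) * (i (aOf e₂) * j (π e₂))
              = i (aOf e₁) * (j (π e₁) * i (aOf e₂)) * j (π e₂) := by group
            _ = i (aOf e₁) * (i (μ (π e₁) (aOf e₂)) * j (π e₁)) * j (π e₂) := by rw [kE2]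
            _ = i (aOf e₁) * i (μ (π e₁) (aOf e₂)) * (j (π e₁) * j (π e₂)) := by group
            _ = i (aOf e₁) * i (μ (π e₁) (aOf e₂)) * (i (f (π e₁) (π e₂)) * j (π e₁ * π e₂)) := by
                rw [kE3]
            _ = i (aOf e₁ * μ (π e₁) (aOf e₂) * f (π e₁) (π e₂)) * j (π e₁ * π e₂) := by
                rw [map_mul, map_mul]; group
        have hπ12 : π (e₁ * e₂) = π e₁ * π e₂ := map_mul π e₁ e₂
        have haOf12 : aOf (e₁ * e₂) = aOf e₁ * μ (π e₁) (aOf e₂) * f (π e₁) (π e₂) := by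
          apply huniq
          rw [hπ12]; exact hprod
        have hA : aOf e₁ * μ (π e₁) (aOf e₂) * f (π e₁) (π e₂) * g (π e₁ * π e₂)
            = aOf e₁ * g (π e₁) * μ (π e₁) (aOf e₂ * g (π e₂)) * f' (π e₁) (π e₂) := by
          rw [hg (π e₁) (π e₂), map_mul]
          simp [mul_assoc, mul_comm, mul_left_comm]
        calc φf (e₁ * e₂) = i' (aOf e₁ * μ (π e₁) (aOf e₂) * f (π e₁) (π e₂) * g (π e₁ * π e₂))
              * j' (π e₁ * π e₂) := by simp only [hφf]; rw [haOf12, hπ12]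
          _ = i' (aOf e₁ * g (π e₁) * μ (π e₁) (aOf e₂ * g (π e₂)) * f' (π e₁) (π e₂))
              * j' (π e₁ * π e₂) := by rw [hA]
          _ = (i' (aOf e₁ * g (π e₁)) * i' (μ (π e₁) (aOf e₂ * g (π e₂))))
              * (i' (f' (π e₁) (π e₂)) * j' (π e₁ * π e₂)) := by
              rw [map_mul, map_mul]; group
          _ = (i' (aOf e₁ * g (π e₁)) * i' (μ (π e₁) (aOf e₂ * g (π e₂)))) * (j' (π e₁) * j' (π e₂)) := by
              rw [k'3]
          _ = i' (aOf e₁ * g (π e₁)) * (i' (μ (π e₁) (aOf e₂ * g (π e₂))) * j' (π e₁)) * j' (π e₂) := by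
              group
          _ = i' (aOf e₁ * g (π e₁)) * (j' (π e₁) * i' (aOf e₂ * g (π e₂))) * j' (π e₂) := by
              rw [k'2]
          _ = φf e₁ * φf e₂ := by simp only [hφf]; group
      have hπφ : ∀ e : E, π' (φf e) = π e := by
        intro e
        simp only [hφf]
        rw [map_mul, hj']
        have : π' (i' (aOf e * g (π e))) = 1 := (hexact' _).mpr ⟨_, rfl⟩
        rw [this, one_mul]
      have hinj : Function.Injective φf := by
        intro e₁ e₂ heq
        have hπeq : π e₁ = π e₂ := by rw [← hπφ e₁, ← hπφ e₂, heq]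
        simp only [hφf] at heq
        rw [hπeq] at heq
        have h2 := mul_right_cancel heq
        have h3 := hi' h2
        have h4 : aOf e₁ = aOf e₂ := mul_right_cancel h3
        rw [haOf e₁, haOf e₂, hπeq, h4]
      have hsurj : Function.Surjective φf := by
        intro e'
        obtain ⟨c, hc⟩ := hdec' e'
        refine ⟨i (c * (g (π' e'))⁻¹) * j (π' e'), ?_⟩
        have hπe : π (i (c * (g (π' e'))⁻¹) * j (π' e')) = π' e' := by
          rw [map_mul, hj]
          have : π (i (c * (g (π' e'))⁻¹)) = 1 := (hexact _).mpr ⟨_, rfl⟩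
          rw [this, one_mul]
        have haOfe : aOf (i (c * (g (π' e'))⁻¹) * j (π' e')) = c * (g (π' e'))⁻¹ := by
          apply huniq
          rw [hπe]
        simp only [hφf]
        rw [hπe, haOfe, inv_mul_cancel_right]
        exact hc.symm
      refine ⟨MulEquiv.ofBijective (MonoidHom.mk' φf hmul) ⟨hinj, hsurj⟩, ?_, hπφ⟩
      intro a
      show φf (i a) = i' a
      have hπia : π (i a) = 1 := (hexact _).mpr ⟨a, rfl⟩
      have haOfia : aOf (i a) = a * (f 1 1)⁻¹ := by
        apply huniq
        rw [hπia, ← c1E, ← map_mul]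
        apply congrArg
        rw [inv_mul_cancel_right]
      simp only [hφf]
      rw [hπia, haOfia, ← c1E', hg1, ← map_mul]
      apply congrArg
      simp [mul_assoc, mul_comm, mul_left_comm]
  · exact fun h hh => Ext10x.part2 μ h hh
end

section
/- (Burnside's theorem on matrix algebras) Let V be a finite-dimensional nonzero vector space over an algebraically closed field k, and let A ⊆ End(V) be a subalgebra such that V has no proper nonzero A-invariant subspace. Then A = End(V). -/
universe u v

section BurnsideAux

variable {k : Type u} {V : Type v} [Field k] [IsAlgClosed k]
    [AddCommGroup V] [Module k V] [FiniteDimensional k V] [Nontrivial V]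
    (A : Subalgebra k (Module.End k V))

/-- Schur-type lemma: an endomorphism commuting with every element of an irreducible
algebra is a scalar. -/
lemma burnside_schur_aux
    (hirr : ∀ W : Submodule k V, (∀ a ∈ A, ∀ v ∈ W, a v ∈ W) → W = ⊥ ∨ W = ⊤)
    (g : Module.End k V) (hg : ∀ a ∈ A, a * g = g * a) :
    ∃ μ : k, g = μ • (1 : Module.End k V) := by
  obtain ⟨μ, hμ⟩ := Module.End.exists_eigenvalue g
  refine ⟨μ, ?_⟩
  have hWinv : ∀ a ∈ A, ∀ v ∈ Module.End.eigenspace g μ, a v ∈ Module.End.eigenspace g μ := by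
    intro a ha v hv
    rw [Module.End.mem_eigenspace_iff] at hv ⊢
    have hcomm := congrArg (fun h : Module.End k V => h v) (hg a ha)
    simp only [Module.End.mul_apply] at hcomm
    rw [← hcomm, hv, map_smul]
  rcases hirr _ hWinv with h | h
  · exact absurd h hμ
  · ext v
    have hv : v ∈ Module.End.eigenspace g μ := h ▸ Submodule.mem_top
    rw [Module.End.mem_eigenspace_iff] at hv
    simpa using hv

end BurnsideAux

/-- Burnside's theorem on matrix algebras: a subalgebra of the endomorphism
algebra of a nonzero finite-dimensional vector space over an algebraically closed field
having no nontrivial invariant subspace is the whole endomorphism algebra. -/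
theorem burnside_matrix_algebras {k : Type u} {V : Type v} [Field k] [IsAlgClosed k]
    [AddCommGroup V] [Module k V] [FiniteDimensional k V] [Nontrivial V]
    (A : Subalgebra k (Module.End k V))
    (hirr : ∀ W : Submodule k V, (∀ a ∈ A, ∀ v ∈ W, a v ∈ W) → W = ⊥ ∨ W = ⊤) :
    A = ⊤ := by
  classical
  set n := Module.finrank k V with hn
  let b : Module.Basis (Fin n) k V := Module.finBasis k V
  -- the product space
  let P := Fin n → V
  -- the evaluation map on the basis
  let Φ : Module.End k V →ₗ[k] P :=
    { toFun := fun f i => f (b i)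
      map_add' := fun f g => by ext i; simp [Pi.add_apply]; rfl
      map_smul' := fun c f => by ext i; simp [Pi.smul_apply]; rfl }
  have hΦinj : Function.Injective Φ := by
    intro f g hfg
    exact b.ext fun i => congrFun hfg i
  -- W is the image of A
  let W : Submodule k P := (Subalgebra.toSubmodule A).map Φ
  -- invariance predicate for submodules of P under the diagonal action of A
  let InvP : Submodule k P → Prop := fun U => ∀ a ∈ A, ∀ x ∈ U, (fun i => a (x i)) ∈ U
  have hWinv : InvP W := by
    rintro a ha x ⟨f, hf, rfl⟩
    exact ⟨a * f, A.mul_mem ha hf, rfl⟩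
  -- choose a maximal invariant complement candidate
  have hmax : ∃ U : Submodule k P, (InvP U ∧ U ⊓ W = ⊥) ∧
      ∀ U' : Submodule k P, (InvP U' ∧ U' ⊓ W = ⊥) → ¬ U < U' := by
    have := (set_has_maximal_iff_noetherian (R := k) (M := P)).mpr inferInstance
    obtain ⟨U, hU, hUmax⟩ := this {U | InvP U ∧ U ⊓ W = ⊥}
      ⟨⊥, by
        constructor
        · intro a _ x hx
          rw [Submodule.mem_bot] at hx ⊢
          subst hx
          funext i
          show a (0 : V) = (0 : V)
          exact map_zero a
        · exact bot_inf_eq W⟩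
    exact ⟨U, hU, fun U' hU' => hUmax U' hU'⟩
  obtain ⟨U, ⟨hUinv, hUW⟩, hUmax⟩ := hmax
  -- claim: U ⊔ W = ⊤
  have hsup : U ⊔ W = ⊤ := by
    by_contra hne
    -- some coordinate copy of V is not contained in U ⊔ W
    have hVi : ∃ i : Fin n, ¬ LinearMap.range (LinearMap.single k (fun _ : Fin n => V) i)
        ≤ U ⊔ W := by
      by_contra h
      push_neg at h
      apply hne
      rw [eq_top_iff]
      intro x _
      rw [← Finset.univ_sum_single x]
      exact Submodule.sum_mem _ fun i _ => h i ⟨x i, rfl⟩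
    obtain ⟨i, hi⟩ := hVi
    set T := U ⊔ W with hT
    have hTinv : InvP T := by
      intro a ha x hx
      rw [Submodule.mem_sup] at hx
      obtain ⟨u, hu, w, hw, rfl⟩ := hx
      rw [Submodule.mem_sup]
      exact ⟨fun j => a (u j), hUinv a ha u hu, fun j => a (w j), hWinv a ha w hw, by
        funext j
        rw [Pi.add_apply, Pi.add_apply, ← map_add]⟩
    have hsingle : ∀ (a : Module.End k V) (v : V),
        (fun j => a ((Pi.single i v : P) j)) = (Pi.single i (a v) : P) := by
      intro a v
      ext j
      by_cases hji : j = i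
      · subst hji; simp
      · simp [Pi.single_apply, hji]
    -- the preimage of T under single i is A-invariant
    have h1 := hirr ((T : Submodule k P).comap (LinearMap.single k (fun _ : Fin n => V) i)) ?_
    · rcases h1 with h | h
      · -- then U ⊔ range (single i) still intersects W trivially, contradicting maximality
        set U' := U ⊔ LinearMap.range (LinearMap.single k (fun _ : Fin n => V) i) with hU'
        have hU'inv : InvP U' := by
          intro a ha x hx
          rw [Submodule.mem_sup] at hx
          obtain ⟨u, hu, w, ⟨v, rfl⟩, rfl⟩ := hx
          rw [Submodule.mem_sup]
          refine ⟨fun j => a (u j), hUinv a ha u hu, Pi.single i (a v), ⟨a v, rfl⟩, ?_⟩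
          funext j
          have hc : a ((Pi.single i v : P) j) = (Pi.single i (a v) : P) j :=
            congrFun (hsingle a v) j
          show a (u j) + (Pi.single i (a v) : P) j = a ((u + (Pi.single i v : P)) j)
          rw [Pi.add_apply, map_add, hc]
        have hU'W : U' ⊓ W = ⊥ := by
          rw [eq_bot_iff]
          intro x hx
          obtain ⟨hx1, hx2⟩ := Submodule.mem_inf.mp hx
          rw [hU', Submodule.mem_sup] at hx1
          obtain ⟨u, hu, y, ⟨v, rfl⟩, rfl⟩ := hx1
          have hvT : Pi.single i v ∈ T := by
            have : (Pi.single i v : P) = (u + Pi.single i v) - u := by abel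
            rw [this]
            exact sub_mem ((le_sup_right : W ≤ T) hx2) ((le_sup_left : U ≤ T) hu)
          have hv0 : v = 0 := by
            have := h ▸ (Submodule.mem_comap.mpr hvT :
              v ∈ (T : Submodule k P).comap (LinearMap.single k (fun _ : Fin n => V) i))
            simpa using this
          subst hv0
          have : u ∈ U ⊓ W := ⟨hu, by simpa using hx2⟩
          rw [hUW] at this
          simpa using this
        apply hUmax U' ⟨hU'inv, hU'W⟩
        rw [hU']
        refine lt_of_le_of_ne le_sup_left ?_
        intro hEq
        apply hi
        have h1 : LinearMap.range (LinearMap.single k (fun _ : Fin n => V) i) ≤ U := by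
          rw [hEq]; exact le_sup_right
        exact h1.trans le_sup_left
      · -- then range (single i) ≤ T, contradiction
        apply hi
        rintro x ⟨v, rfl⟩
        have : v ∈ (T : Submodule k P).comap (LinearMap.single k (fun _ : Fin n => V) i) :=
          h ▸ Submodule.mem_top
        exact Submodule.mem_comap.mp this
    · intro a ha v hv
      rw [Submodule.mem_comap] at hv ⊢
      have := hTinv a ha _ hv
      rwa [LinearMap.coe_single, hsingle a v] at this
  -- the projection onto W along U
  have hcompl : IsCompl W U := ⟨by rw [disjoint_iff, inf_comm]; exact hUW,
    by rw [codisjoint_iff, sup_comm]; exact hsup⟩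
  let π : P →ₗ[k] P := W.subtype ∘ₗ (W.projectionOnto U hcompl)
  have hπmem : ∀ x, π x ∈ W := fun x => (W.projectionOnto U hcompl x).2
  have hπW : ∀ x ∈ W, π x = x := fun x hx => by
    simp only [π, LinearMap.comp_apply]
    rw [show x = ((⟨x, hx⟩ : W) : P) from rfl, Submodule.projectionOnto_apply_left]
    rfl
  have hπU : ∀ x ∈ U, π x = 0 := fun x hx => by
    simp only [π, LinearMap.comp_apply]
    rw [Submodule.projectionOnto_apply_of_mem_right _ hx]
    simp
  have hπdecomp : ∀ (w u : P), w ∈ W → u ∈ U → π (w + u) = w := by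
    intro w u hw hu
    rw [map_add, hπW w hw, hπU u hu, add_zero]
  -- π commutes with the diagonal action of A
  have hπcomm : ∀ a ∈ A, ∀ x : P, π (fun j => a (x j)) = fun j => a (π x j) := by
    intro a ha x
    obtain ⟨w, hw, u, hu, rfl⟩ : ∃ w ∈ W, ∃ u ∈ U, w + u = x := by
      have : x ∈ W ⊔ U := by rw [hcompl.sup_eq_top]; trivial
      rw [Submodule.mem_sup] at this
      obtain ⟨w, hw, u, hu, h⟩ := this
      exact ⟨w, hw, u, hu, h⟩
    have h1 : (fun j => a ((w + u) j)) = (fun j => a (w j)) + (fun j => a (u j)) := by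
      funext j
      rw [Pi.add_apply, Pi.add_apply, ← map_add]
    rw [h1, hπdecomp _ _ (hWinv a ha w hw) (hUinv a ha u hu), hπdecomp w u hw hu]
  -- the matrix entries of π are scalars
  let G : Fin n → Fin n → Module.End k V := fun i j =>
    (LinearMap.proj j) ∘ₗ π ∘ₗ (LinearMap.single k (fun _ : Fin n => V) i)
  have hGcomm : ∀ i j, ∀ a ∈ A, a * G i j = G i j * a := by
    intro i j a ha
    ext v
    have hsingle : (Pi.single i (a v) : P) = fun j' => a ((Pi.single i v : P) j') := by
      funext j'
      by_cases hji : j' = i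
      · subst hji; simp
      · simp [Pi.single_apply, hji]
    show a (π (Pi.single i v) j) = π (Pi.single i (a v)) j
    rw [hsingle, hπcomm a ha]
  have hμ : ∀ i j, ∃ μ : k, G i j = μ • (1 : Module.End k V) := fun i j =>
    burnside_schur_aux A hirr (G i j) (hGcomm i j)
  choose μ hμspec using hμ
  -- compute π on arbitrary vectors
  have hπapply : ∀ (x : P) (j : Fin n), π x j = ∑ i, μ i j • x i := by
    intro x j
    conv_lhs => rw [← Finset.univ_sum_single x]
    rw [map_sum]
    rw [Finset.sum_apply]
    congr 1
    ext i
    have : π (Pi.single i (x i)) j = G i j (x i) := rfl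
    rw [this, hμspec i j]
    simp
  -- the basis tuple is in W (it is Φ 1)
  have hbW : (fun i => b i : P) ∈ W := ⟨1, A.one_mem, by ext i; simp [Φ]⟩
  have hbfix : ∀ j, b j = ∑ i, μ i j • b i := by
    intro j
    have := hπW _ hbW
    have h2 := congrFun this j
    rw [hπapply] at h2
    exact h2.symm
  rw [eq_top_iff]
  intro f _
  -- show Φ f ∈ W
  have hkey : π (Φ f) = Φ f := by
    ext j
    rw [hπapply]
    have : ∑ i, μ i j • (Φ f) i = f (∑ i, μ i j • b i) := by
      rw [map_sum]
      congr 1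
      ext i
      simp [Φ]
    rw [this, ← hbfix j]
    rfl
  have hfW : Φ f ∈ W := hkey ▸ hπmem (Φ f)
  obtain ⟨g, hg, hgf⟩ := hfW
  have : g = f := b.ext fun i => congrFun hgf i
  exact this ▸ hg
end

section
/- (Kummer theory) Let K be a field containing a primitive n-th root of unity, with n invertible in K. Then H¹(Gal(K̄/K), μₙ) is isomorphic to K^×/(K^×)ⁿ. -/
universe u

noncomputable section

/-- The separable closure of `K` (inside an algebraic closure). -/
abbrev SepClos (K : Type u) [Field K] : Type u :=
  separableClosure K (AlgebraicClosure K)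

/-- The absolute Galois group `Gal(K̄ₛ/K)`, carrying the Krull topology. -/
abbrev AbsGal (K : Type u) [Field K] : Type u :=
  SepClos K ≃ₐ[K] SepClos K

/-- Continuous 1-cocycles of the absolute Galois group with values in `μₙ ⊆ K̄ₛ^×`
(the target being discrete). -/
def KummerCocycle (K : Type u) [Field K] (n : ℕ) : Type u :=
  {h : AbsGal K → SepClos K //
    (∀ σ, h σ ^ n = 1) ∧
    (@Continuous (AbsGal K) (SepClos K) _ ⊥ h) ∧
    ∀ σ τ : AbsGal K, h (σ * τ) = h σ * σ (h τ)}

/-- Two cocycles are cohomologous if they differ by the coboundary `σ ↦ σ(g)·g⁻¹`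
of an `n`-th root of unity `g`. -/
def KummerCohomologous (K : Type u) [Field K] (n : ℕ) (h h' : KummerCocycle K n) : Prop :=
  ∃ g : SepClos K, g ^ n = 1 ∧ ∀ σ : AbsGal K, h.1 σ = h'.1 σ * (σ g * g⁻¹)

/-- The continuous Galois cohomology group `H¹(Gal(K̄ₛ/K), μₙ)` as a set of classes. -/
def KummerH1 (K : Type u) [Field K] (n : ℕ) : Type u :=
  Quot (KummerCohomologous K n)

open IntermediateField

section Aux

variable {K L : Type u} [Field K] [Field L] [Algebra K L]

/-- Roots of unity in `L` are fixed by all automorphisms, when `K` has a primitive root. -/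
lemma Kummer.rootOfUnity_fixed {n : ℕ} (hn : 0 < n) {ζ : K} (hζ : IsPrimitiveRoot ζ n)
    {x : L} (hx : x ^ n = 1) (σ : L ≃ₐ[K] L) : σ x = x := by
  haveI : NeZero n := ⟨hn.ne'⟩
  have hζ' : IsPrimitiveRoot (algebraMap K L ζ) n :=
    hζ.map_of_injective (algebraMap K L).injective
  obtain ⟨i, _, rfl⟩ := hζ'.eq_pow_of_pow_eq_one hx
  rw [← map_pow, AlgEquiv.commutes]

set_option maxHeartbeats 1000000 in
/-- An element of a Galois extension fixed by all automorphisms lies in `K`. -/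
lemma Kummer.fixed_mem_range [IsGalois K L] [Algebra.IsIntegral K L] {x : L}
    (hx : ∀ σ : L ≃ₐ[K] L, σ x = x) : ∃ k : K, algebraMap K L k = x := by
  have hint : IsIntegral K x := Algebra.IsIntegral.isIntegral x
  haveI : FiniteDimensional K K⟮x⟯ := IntermediateField.adjoin.finiteDimensional hint
  set E := normalClosure K K⟮x⟯ L with hE
  have hxE : x ∈ E := IntermediateField.le_normalClosure _
    (IntermediateField.mem_adjoin_simple_self K x)
  haveI : FiniteDimensional K E := inferInstance
  haveI : IsGalois K E := inferInstance
  have key : ∀ σ' : E ≃ₐ[K] E, σ' ⟨x, hxE⟩ = ⟨x, hxE⟩ := by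
    intro σ'
    have h1 := AlgEquiv.liftNormal_commutes σ' L ⟨x, hxE⟩
    have h2 : (σ'.liftNormal L) x = x := hx _
    have h3 : algebraMap E L (σ' ⟨x, hxE⟩) = algebraMap E L ⟨x, hxE⟩ := by
      rw [← h1]
      exact h2
    exact (algebraMap E L).injective h3
  have hbot : (⟨x, hxE⟩ : E) ∈ (⊥ : IntermediateField K E) := by
    rw [← IsGalois.fixedField_fixingSubgroup (⊥ : IntermediateField K E),
      IntermediateField.fixingSubgroup_bot]
    intro g
    exact key g
  obtain ⟨k, hk⟩ := IntermediateField.mem_bot.1 hbot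
  refine ⟨k, ?_⟩
  have := congrArg (algebraMap E L) hk
  rwa [← IsScalarTower.algebraMap_apply] at this

/-- Evaluation fibers are open in the Krull topology. -/
lemma Kummer.isOpen_eval [Algebra.IsIntegral K L] (β y : L) :
    IsOpen {σ : L ≃ₐ[K] L | σ β = y} := by
  rw [isOpen_iff_forall_mem_open]
  intro σ₀ hσ₀
  haveI : FiniteDimensional K K⟮β⟯ :=
    IntermediateField.adjoin.finiteDimensional (Algebra.IsIntegral.isIntegral β)
  refine ⟨(fun τ => σ₀ * τ) '' (K⟮β⟯.fixingSubgroup : Set (L ≃ₐ[K] L)), ?_, ?_, ?_⟩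
  · rintro _ ⟨τ, hτ, rfl⟩
    have hτβ : τ β = β := hτ ⟨β, IntermediateField.mem_adjoin_simple_self K β⟩
    show (σ₀ * τ) β = y
    rw [AlgEquiv.mul_apply, hτβ]
    exact hσ₀
  · exact (Homeomorph.mulLeft σ₀).isOpenMap _ (IntermediateField.fixingSubgroup_isOpen _)
  · exact ⟨1, Subgroup.one_mem _, mul_one σ₀⟩

/-- A map with open fibers is continuous into the discrete topology. -/
lemma Kummer.continuous_bot {X : Type u} (f : (L ≃ₐ[K] L) → X)
    (hf : ∀ y, IsOpen {σ : L ≃ₐ[K] L | f σ = y}) : @Continuous _ X _ ⊥ f := by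
  rw [continuous_def]
  intro s _
  have : f ⁻¹' s = ⋃ y ∈ s, {σ | f σ = y} := by
    ext σ; simp [eq_comm]
  rw [this]
  exact isOpen_biUnion fun y _ => hf y

set_option maxHeartbeats 1000000 in
set_option synthInstance.maxHeartbeats 400000 in
/-- Key existence lemma via Hilbert 90: every Kummer cocycle is the coboundary of some `β`
whose `n`-th power comes from `K`. -/
lemma Kummer.exists_beta [IsGalois K L] [Algebra.IsIntegral K L] {n : ℕ} (hn : 0 < n)
    {ζ : K} (hζ : IsPrimitiveRoot ζ n) (h : (L ≃ₐ[K] L) → L)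
    (hpow : ∀ σ, h σ ^ n = 1)
    (hcont : @Continuous _ L _ ⊥ h)
    (hcoc : ∀ σ τ, h (σ * τ) = h σ * σ (h τ)) :
    ∃ (β : L) (a : Kˣ), β ≠ 0 ∧ (∀ σ, h σ = σ β * β⁻¹) ∧ algebraMap K L a = β ^ n := by
  have hfix : ∀ σ τ : L ≃ₐ[K] L, τ (h σ) = h σ := fun σ τ =>
    rootOfUnity_fixed hn hζ (hpow σ) τ
  have hne : ∀ σ, h σ ≠ 0 := by
    intro σ hz
    have := hpow σ
    rw [hz, zero_pow hn.ne'] at this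
    exact zero_ne_one this
  have hmul : ∀ σ τ, h (σ * τ) = h σ * h τ := fun σ τ => by rw [hcoc, hfix]
  have h1 : h 1 = 1 := by
    have := hmul 1 1
    rw [mul_one] at this
    exact (mul_left_cancel₀ (hne 1) (by rw [mul_one]; exact this)).symm
  have hnhds : {σ : L ≃ₐ[K] L | h σ = 1} ∈ nhds (1 : L ≃ₐ[K] L) := by
    letI : TopologicalSpace L := ⊥
    haveI : DiscreteTopology L := ⟨rfl⟩
    have hopen : IsOpen {σ : L ≃ₐ[K] L | h σ = 1} := by
      have : {σ : L ≃ₐ[K] L | h σ = 1} = h ⁻¹' {1} := by ext σ; simp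
      rw [this]
      exact hcont.isOpen_preimage _ (isOpen_discrete _)
    exact hopen.mem_nhds h1
  obtain ⟨E, hEfin, hEsub⟩ := (krullTopology_mem_nhds_one_iff K L _).1 hnhds
  haveI : FiniteDimensional K E := hEfin
  set E' := normalClosure K E L with hE'
  haveI : FiniteDimensional K E' := inferInstance
  haveI : IsGalois K E' := inferInstance
  have hEE' : E ≤ E' := IntermediateField.le_normalClosure E
  set res : (L ≃ₐ[K] L) →* (E' ≃ₐ[K] E') := AlgEquiv.restrictNormalHom E' with hres
  have hsurj : Function.Surjective res := AlgEquiv.restrictNormalHom_surjective L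
  have hfixE' : ∀ γ : L ≃ₐ[K] L, res γ = 1 → h γ = 1 := by
    intro γ hγ
    apply hEsub
    intro y
    have hy : (y : L) ∈ E' := hEE' y.2
    have := AlgEquiv.restrictNormalHom_apply E' γ ⟨(y : L), hy⟩
    rw [hγ] at this
    simpa using this.symm
  have hresfib : ∀ σ τ, res σ = res τ → h σ = h τ := by
    intro σ τ hστ
    have e1 : σ = τ * (τ⁻¹ * σ) := by group
    rw [e1, hmul]
    have e2 : res (τ⁻¹ * σ) = 1 := by
      rw [map_mul, map_inv, hστ, inv_mul_cancel]
    rw [hfixE' _ e2, mul_one]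
  have hK : ∀ σ, ∃ k : K, algebraMap K L k = h σ := fun σ => fixed_mem_range (hfix σ)
  set kv : (L ≃ₐ[K] L) → K := fun σ => (hK σ).choose with hkvdef
  have hkv : ∀ σ, algebraMap K L (kv σ) = h σ := fun σ => (hK σ).choose_spec
  have hkvne : ∀ σ, kv σ ≠ 0 := by
    intro σ hz
    apply hne σ
    rw [← hkv σ, hz, map_zero]
  set s : (E' ≃ₐ[K] E') → (L ≃ₐ[K] L) := fun g => (hsurj g).choose with hsdef
  have hs : ∀ g, res (s g) = g := fun g => (hsurj g).choose_spec
  set f : (E' ≃ₐ[K] E') → (↥E')ˣ := fun g =>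
    Units.mk0 (algebraMap K E' (kv (s g)))
      (fun hz => hkvne (s g) ((algebraMap K E').injective (by rw [hz, map_zero]))) with hfdef
  have hfL : ∀ g, algebraMap E' L ((f g : E')) = h (s g) := by
    intro g
    show algebraMap E' L (algebraMap K E' (kv (s g))) = _
    rw [← IsScalarTower.algebraMap_apply, hkv]
  have hfcoc : groupCohomology.IsMulCocycle₁ f := by
    intro g₁ g₂
    have hsm : g₁ • f g₂ = f g₂ := by
      rw [AlgEquiv.smul_units_def]
      apply Units.ext
      show g₁ ((f g₂ : E')) = (f g₂ : E')
      show g₁ (algebraMap K E' (kv (s g₂))) = _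
      rw [AlgEquiv.commutes]
      rfl
    rw [hsm]
    apply Units.ext
    apply (algebraMap E' L).injective
    rw [Units.val_mul, map_mul, hfL, hfL, hfL, mul_comm (h (s g₂)), ← hmul]
    apply hresfib
    rw [map_mul, hs, hs, hs]
  obtain ⟨u, hu⟩ := groupCohomology.isMulCoboundary₁_of_isMulCocycle₁_of_aut_to_units f hfcoc
  set β : L := algebraMap E' L (u : E') with hβdef
  have hβne : β ≠ 0 := by
    intro e
    apply Units.ne_zero u
    apply (algebraMap E' L).injective
    rw [map_zero]
    exact e
  refine ⟨β, ?_⟩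
  have hrel : ∀ σ : L ≃ₐ[K] L, h σ = σ β * β⁻¹ := by
    intro σ
    have := hu (res σ)
    have hval : (res σ) (u : E') * ((u : E') )⁻¹ = (f (res σ) : E') := by
      have := congrArg (Units.val) this
      rw [Units.val_div_eq_div_val] at this
      rw [div_eq_mul_inv] at this
      simpa [AlgEquiv.smul_units_def] using this
    have hmapped := congrArg (algebraMap E' L) hval
    rw [map_mul, map_inv₀, hfL] at hmapped
    have hcomm : algebraMap E' L ((res σ) (u : E')) = σ β := by
      rw [hβdef]
      exact AlgEquiv.restrictNormalHom_apply E' σ u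
    rw [hcomm] at hmapped
    have he : h σ = h (s (res σ)) := hresfib _ _ (by rw [hs])
    rw [he, ← hmapped]
  have hfixn : ∀ σ : L ≃ₐ[K] L, σ (β ^ n) = β ^ n := by
    intro σ
    have : σ β = h σ * β := by
      rw [hrel σ, mul_assoc, inv_mul_cancel₀ hβne, mul_one]
    rw [map_pow, this, mul_pow, hpow, one_mul]
  obtain ⟨a0, ha0⟩ := fixed_mem_range hfixn
  have ha0ne : a0 ≠ 0 := by
    intro hz
    rw [hz, map_zero] at ha0
    exact pow_ne_zero n hβne ha0.symm
  exact ⟨Units.mk0 a0 ha0ne, hβne, hrel, ha0⟩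

/-- If the `n`-th powers agree up to an `n`-th power in `K`, the coboundaries agree. -/
lemma Kummer.rel_of_eq [IsGalois K L] [Algebra.IsIntegral K L] {n : ℕ} (hn : 0 < n)
    {ζ : K} (hζ : IsPrimitiveRoot ζ n) {β γ : L} (hβ : β ≠ 0) (hγ : γ ≠ 0)
    {a b : Kˣ} (ha : algebraMap K L a = β ^ n) (hb : algebraMap K L b = γ ^ n)
    {c : Kˣ} (hc : (a : K) = b * c ^ n) (σ : L ≃ₐ[K] L) :
    σ β * β⁻¹ = σ γ * γ⁻¹ := by
  set d : L := algebraMap K L c with hd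
  have hd0 : d ≠ 0 := by
    intro e
    exact Units.ne_zero c ((algebraMap K L).injective (by rw [map_zero]; exact e))
  have hγd : γ * d ≠ 0 := mul_ne_zero hγ hd0
  have hδn : (β * (γ * d)⁻¹) ^ n = 1 := by
    have h1 : (γ * d) ^ n = β ^ n := by
      rw [mul_pow, ← hb, hd, ← map_pow, ← map_mul, ← ha]
      exact congrArg (algebraMap K L) (by push_cast [hc]; ring)
    rw [mul_pow, inv_pow, h1]
    exact mul_inv_cancel₀ (pow_ne_zero n hβ)
  have hδfix := rootOfUnity_fixed hn hζ hδn σ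
  have hσγ : σ γ ≠ 0 := fun e => hγ (by simpa using σ.injective (by rw [e, map_zero]))
  have hσβ : σ β ≠ 0 := fun e => hβ (by simpa using σ.injective (by rw [e, map_zero]))
  rw [map_mul, map_inv₀, map_mul, hd, AlgEquiv.commutes] at hδfix
  -- hδfix : σ β * (σ γ * d)⁻¹ = β * (γ * d)⁻¹
  have key : σ β * γ = β * σ γ := by
    apply mul_right_cancel₀ hd0
    have h2 : σ β * (γ * d) = β * (σ γ * d) := by
      field_simp at hδfix
      linear_combination d * hδfix
    linear_combination h2
  field_simp
  linear_combination key

/-- Converse: if the coboundaries agree then the `n`-th powers agree modulo `n`-th powers. -/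
lemma Kummer.compare [IsGalois K L] [Algebra.IsIntegral K L] {n : ℕ} (hn : 0 < n)
    {ζ : K} (hζ : IsPrimitiveRoot ζ n) {β γ : L} (hβ : β ≠ 0) (hγ : γ ≠ 0)
    (hrel : ∀ σ : L ≃ₐ[K] L, σ β * β⁻¹ = σ γ * γ⁻¹)
    {a b : Kˣ} (ha : algebraMap K L a = β ^ n) (hb : algebraMap K L b = γ ^ n) :
    (QuotientGroup.mk a : Kˣ ⧸ (powMonoidHom n : Kˣ →* Kˣ).range) = QuotientGroup.mk b := by
  have hfixδ : ∀ σ : L ≃ₐ[K] L, σ (β * γ⁻¹) = β * γ⁻¹ := by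
    intro σ
    have hσγ : σ γ ≠ 0 := fun e => hγ (by simpa using σ.injective (by rw [e, map_zero]))
    have h2 := hrel σ
    rw [map_mul, map_inv₀]
    field_simp at h2 ⊢
    linear_combination h2
  obtain ⟨c0, hc0⟩ := fixed_mem_range hfixδ
  have hc0ne : c0 ≠ 0 := by
    intro hz
    rw [hz, map_zero] at hc0
    exact mul_ne_zero hβ (inv_ne_zero hγ) hc0.symm
  have hkey : (a : K) = c0 ^ n * b := by
    apply (algebraMap K L).injective
    rw [map_mul, map_pow, hc0, ha]
    rw [show ((b : K) : K) = (b : K) from rfl, hb]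
    field_simp
    rw [div_pow, div_mul_cancel₀ _ (pow_ne_zero n hγ)]
  rw [QuotientGroup.eq]
  refine ⟨(Units.mk0 c0 hc0ne)⁻¹, ?_⟩
  have : a = Units.mk0 c0 hc0ne ^ n * b := by
    apply Units.ext
    push_cast
    exact hkey
  rw [this]
  apply Units.ext
  push_cast
  field_simp
  rw [powMonoidHom_apply, Units.val_pow_eq_pow_val, Units.val_inv_eq_inv_val, inv_pow]
  exact inv_mul_cancel₀ (pow_ne_zero n (Units.ne_zero _))

end Aux

set_option maxHeartbeats 2000000 in
set_option synthInstance.maxHeartbeats 400000 in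
/-- Kummer theory: if `K` contains a primitive `n`-th root of unity and `n`
is invertible in `K`, then `H¹(Gal(K̄/K), μₙ) ≅ K^×/(K^×)ⁿ`, multiplicatively. -/
theorem kummer_theory (K : Type u) [Field K] (n : ℕ) (hn : 0 < n)
    (hinv : (n : K) ≠ 0) (ζ : K) (hζ : IsPrimitiveRoot ζ n) :
    ∃ e : KummerH1 K n ≃ (Kˣ ⧸ (powMonoidHom n : Kˣ →* Kˣ).range),
      ∀ h h' hh : KummerCocycle K n, (∀ σ, hh.1 σ = h.1 σ * h'.1 σ) →
        e (Quot.mk _ hh) = e (Quot.mk _ h) * e (Quot.mk _ h') := by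
  classical
  have spec : ∀ h : KummerCocycle K n, ∃ (β : SepClos K) (a : Kˣ), β ≠ 0 ∧
      (∀ σ : AbsGal K, h.1 σ = σ β * β⁻¹) ∧ algebraMap K (SepClos K) a = β ^ n :=
    fun h => Kummer.exists_beta hn hζ h.1 h.2.1 h.2.2.1 h.2.2.2
  set B : KummerCocycle K n → SepClos K := fun h => (spec h).choose with hBdef
  set A : KummerCocycle K n → Kˣ := fun h => (spec h).choose_spec.choose with hAdef
  have hB : ∀ h : KummerCocycle K n, B h ≠ 0 ∧
      (∀ σ : AbsGal K, h.1 σ = σ (B h) * (B h)⁻¹) ∧ algebraMap K (SepClos K) (A h) = (B h) ^ n :=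
    fun h => (spec h).choose_spec.choose_spec
  set P : KummerCocycle K n → Kˣ ⧸ (powMonoidHom n : Kˣ →* Kˣ).range :=
    fun h => QuotientGroup.mk (A h) with hPdef
  -- P is constant on cohomology classes (which are singletons here)
  have hwd : ∀ h h' : KummerCocycle K n, KummerCohomologous K n h h' → P h = P h' := by
    rintro h h' ⟨g, hg, hrel⟩
    have hgne : g ≠ 0 := by
      intro hz
      rw [hz, zero_pow hn.ne'] at hg
      exact zero_ne_one hg
    have : h = h' := by
      apply Subtype.ext
      funext σ
      have hfixg : σ g = g := Kummer.rootOfUnity_fixed hn hζ hg σ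
      rw [hrel σ, hfixg, mul_inv_cancel₀ hgne, mul_one]
    rw [this]
  set F : KummerH1 K n → Kˣ ⧸ (powMonoidHom n : Kˣ →* Kˣ).range :=
    Quot.lift P hwd with hFdef
  -- injectivity
  have hinj : Function.Injective F := by
    intro q q'
    induction q using Quot.ind with
    | _ h =>
    induction q' using Quot.ind with
    | _ h' =>
    intro heq
    have heq' : (QuotientGroup.mk (A h) : Kˣ ⧸ (powMonoidHom n : Kˣ →* Kˣ).range) =
        QuotientGroup.mk (A h') := heq
    rw [QuotientGroup.eq] at heq'
    obtain ⟨c, hc⟩ := heq'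
    -- (A h)⁻¹ * A h' = c ^ n
    have hac : ((A h : Kˣ) : K) = (A h' : Kˣ) * (c⁻¹ : Kˣ) ^ n := by
      have h3 : (A h : Kˣ) = A h' * (c⁻¹ : Kˣ) ^ n := by
        have h2 : A h' = A h * powMonoidHom n c := by
          rw [hc, mul_inv_cancel_left]
        rw [h2]
        simp only [powMonoidHom_apply]
        group
      rw [h3]
      push_cast
      ring
    have hrel : ∀ σ : AbsGal K, σ (B h) * (B h)⁻¹ = σ (B h') * (B h')⁻¹ :=
      Kummer.rel_of_eq hn hζ (hB h).1 (hB h').1 (hB h).2.2 (hB h').2.2 hac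
    have : h = h' := by
      apply Subtype.ext
      funext σ
      rw [(hB h).2.1 σ, (hB h').2.1 σ, hrel σ]
    rw [this]
  -- surjectivity
  have hL0 : ∀ k : K, k ≠ 0 → algebraMap K (SepClos K) k ≠ 0 := by
    intro k hk e
    exact hk ((algebraMap K (SepClos K)).injective (by rw [map_zero]; exact e))
  have hsurj : Function.Surjective F := by
    intro q
    induction q using QuotientGroup.induction_on with
    | H a =>
    haveI : IsSepClosed (SepClos K) := IsSepClosure.sep_closed K
    haveI : NeZero ((n : ℕ) : SepClos K) := by
      refine ⟨?_⟩
      rw [← map_natCast (algebraMap K (SepClos K))]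
      exact hL0 _ hinv
    obtain ⟨z, hz⟩ := IsSepClosed.exists_pow_nat_eq (algebraMap K (SepClos K) (a : K)) n
    have hιa : algebraMap K (SepClos K) (a : K) ≠ 0 := hL0 _ (Units.ne_zero a)
    have hzne : z ≠ 0 := by
      intro e
      rw [e, zero_pow hn.ne'] at hz
      exact hιa hz.symm
    have hσz : ∀ σ : AbsGal K, σ z ≠ 0 :=
      fun σ e => hzne (by simpa using σ.injective (by rw [e, map_zero]))
    have hσzn : ∀ σ : AbsGal K, σ z ^ n = z ^ n := by
      intro σ
      rw [← map_pow, hz, AlgEquiv.commutes]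
    have hc1 : ∀ σ : AbsGal K, (σ z * z⁻¹) ^ n = 1 := by
      intro σ
      rw [mul_pow, inv_pow, hσzn σ, hz]
      exact mul_inv_cancel₀ hιa
    have hc2 : @Continuous (AbsGal K) (SepClos K) _ ⊥ (fun σ => σ z * z⁻¹) := by
      apply Kummer.continuous_bot
      intro y
      have : {σ : AbsGal K | σ z * z⁻¹ = y} = {σ : AbsGal K | σ z = y * z} := by
        ext σ
        constructor
        · intro hσ
          have h3 : σ z * z⁻¹ * z = y * z := by rw [hσ]
          rwa [inv_mul_cancel_right₀ hzne] at h3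
        · intro hσ
          show σ z * z⁻¹ = y
          rw [hσ, mul_inv_cancel_right₀ hzne]
      rw [this]
      exact Kummer.isOpen_eval z (y * z)
    have hc3 : ∀ σ τ : AbsGal K, (σ * τ) z * z⁻¹ = (σ z * z⁻¹) * σ (τ z * z⁻¹) := by
      intro σ τ
      rw [map_mul, map_inv₀, AlgEquiv.mul_apply]
      have := hσz σ
      field_simp
    set hh : KummerCocycle K n := ⟨fun σ => σ z * z⁻¹, hc1, hc2, hc3⟩ with hhdef
    refine ⟨Quot.mk _ hh, ?_⟩
    show P hh = QuotientGroup.mk a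
    apply Kummer.compare hn hζ (hB hh).1 hzne ?_ (hB hh).2.2 hz.symm
    intro σ
    rw [← (hB hh).2.1 σ]
  refine ⟨Equiv.ofBijective F ⟨hinj, hsurj⟩, ?_⟩
  intro h h' hh hprod
  show F (Quot.mk _ hh) = F (Quot.mk _ h) * F (Quot.mk _ h')
  show (QuotientGroup.mk (A hh) : Kˣ ⧸ (powMonoidHom n : Kˣ →* Kˣ).range) =
    QuotientGroup.mk (A h) * QuotientGroup.mk (A h')
  rw [← QuotientGroup.mk_mul]
  have hγ0 : B h * B h' ≠ 0 := mul_ne_zero (hB h).1 (hB h').1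
  apply Kummer.compare hn hζ (hB hh).1 hγ0 ?_ (hB hh).2.2 ?_
  · intro σ
    have hbh : σ (B h) ≠ 0 :=
      fun e => (hB h).1 (by simpa using σ.injective (by rw [e, map_zero]))
    have hbh' : σ (B h') ≠ 0 :=
      fun e => (hB h').1 (by simpa using σ.injective (by rw [e, map_zero]))
    rw [← (hB hh).2.1 σ, hprod σ, (hB h).2.1 σ, (hB h').2.1 σ, map_mul]
    field_simp
  · rw [Units.val_mul, map_mul, (hB h).2.2, (hB h').2.2, mul_pow]

end
end

section
/- Let X be a strongly minimal structure with acl(∅) ∩ X ≠ ∅, and let E be a definable equivalence relation on a definable subset X₀ ⊆ Xⁿ. Then there exists a definable subset Y₀ ⊆ X₀ meeting every E-class such that every E-class of Y₀ is finite. -/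
open FirstOrder

universe u v w

section LPAux

open FirstOrder.Language Set

variable {L : FirstOrder.Language.{u, v}} {M : Type w} [L.Structure M]

noncomputable def LP.iInf {α β : Type*} {k : ℕ} (s : Finset β)
    (f : β → L.BoundedFormula α k) : L.BoundedFormula α k :=
  BoundedFormula.iInf (fun b : s => f b)

noncomputable def LP.iSup {α β : Type*} {k : ℕ} (s : Finset β)
    (f : β → L.BoundedFormula α k) : L.BoundedFormula α k :=
  BoundedFormula.iSup (fun b : s => f b)

theorem LP.realize_iInf' {α β : Type*} (s : Finset β)
    (f : β → L.Formula α) (v : α → M) :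
    Formula.Realize (LP.iInf s f) v ↔ ∀ b ∈ s, (f b).Realize v := by
  simp [LP.iInf, Formula.Realize]

theorem LP.realize_iSup' {α β : Type*} (s : Finset β)
    (f : β → L.Formula α) (v : α → M) :
    Formula.Realize (LP.iSup s f) v ↔ ∃ b ∈ s, (f b).Realize v := by
  simp [LP.iSup, Formula.Realize]

theorem LP.realize_subst' {α β : Type*} (φ : L.Formula α) (tf : α → L.Term β) (v : β → M) :
    Formula.Realize (φ.subst tf) v ↔ φ.Realize (fun a => (tf a).realize v) :=
  BoundedFormula.realize_subst

theorem LP.uniform_bound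
    (huniform : ∀ (m : ℕ) (φ : L.Formula (Fin m ⊕ Fin 1)), ∃ N : ℕ,
      ∀ v : Fin m → M,
        {a : M | φ.Realize (Sum.elim v (fun _ => a))}.Finite →
        {a : M | φ.Realize (Sum.elim v (fun _ => a))}.ncard ≤ N)
    {α : Type} [Fintype α] (φ : L[[(univ : Set M)]].Formula (α ⊕ Fin 1)) :
    ∃ N : ℕ, ∀ v : α → M,
      {a : M | φ.Realize (Sum.elim v (fun _ => a))}.Finite →
      {a : M | φ.Realize (Sum.elim v (fun _ => a))}.ncard ≤ N := by
  classical
  let ψ : L.Formula (↥(univ : Set M) ⊕ (α ⊕ Fin 1)) := BoundedFormula.constantsVarsEquiv φ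
  have hψ : ∀ (v : α ⊕ Fin 1 → M),
      ψ.Realize (Sum.elim (fun a : ↥(univ : Set M) => ((L.con a : M))) v) ↔ φ.Realize v :=
    fun v => BoundedFormula.realize_constantsVarsEquiv
  let D : Finset ↥(univ : Set M) := ψ.freeVarFinset.preimage Sum.inl (Sum.inl_injective.injOn)
  let k₀ : ℕ := D.card
  let eD : {x // x ∈ D} ≃ Fin k₀ := D.equivFin
  let eα : α ≃ Fin (Fintype.card α) := Fintype.equivFin α
  let m' : ℕ := k₀ + Fintype.card α
  have hsub : (↑ψ.freeVarFinset : Set (↥(univ : Set M) ⊕ (α ⊕ Fin 1))) ⊆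
      (↑ψ.freeVarFinset : Set _) := Set.Subset.refl _
  let ρ : L.Formula {x : ↥(univ : Set M) ⊕ (α ⊕ Fin 1) // x ∈ (↑ψ.freeVarFinset : Set _)} :=
    ψ.restrictFreeVar (Set.inclusion hsub)
  let r : {x : ↥(univ : Set M) ⊕ (α ⊕ Fin 1) // x ∈ (↑ψ.freeVarFinset : Set _)} →
      (Fin m' ⊕ Fin 1) := fun x => match x with
    | ⟨Sum.inl a, h⟩ => Sum.inl (finSumFinEquiv (Sum.inl (eD ⟨a, by
        simpa [D, Finset.mem_preimage] using h⟩)))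
    | ⟨Sum.inr (Sum.inl b), _⟩ => Sum.inl (finSumFinEquiv (Sum.inr (eα b)))
    | ⟨Sum.inr (Sum.inr j), _⟩ => Sum.inr j
  let θ : L.Formula (Fin m' ⊕ Fin 1) := Formula.relabel r ρ
  obtain ⟨N, hN⟩ := huniform m' θ
  refine ⟨N, fun v hfin => ?_⟩
  let w : Fin m' → M := fun i =>
    Sum.elim (fun j : Fin k₀ => (((eD.symm j : {x // x ∈ D}) : ↥(univ : Set M)) : M))
      (fun j : Fin (Fintype.card α) => v (eα.symm j)) (finSumFinEquiv.symm i)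
  have key : ∀ a : M, θ.Realize (Sum.elim w (fun _ => a)) ↔
      φ.Realize (Sum.elim v (fun _ => a)) := by
    intro a
    have h1 : θ.Realize (Sum.elim w (fun _ => a)) ↔
        Formula.Realize ρ (Sum.elim w (fun _ : Fin 1 => a) ∘ r) := Formula.realize_relabel
    rw [h1]
    have h2 : Sum.elim w (fun _ : Fin 1 => a) ∘ r =
        (Sum.elim (fun b : ↥(univ : Set M) => ((L.con b : M)))
          (Sum.elim v (fun _ : Fin 1 => a))) ∘ (Subtype.val) := by
      funext x
      rcases x with ⟨a' | b' | j, hx⟩ <;>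
        simp [r, w, Set.inclusion, coe_con]
    rw [h2]
    have h3 := (BoundedFormula.realize_restrictFreeVar' hsub
      (v := Sum.elim (fun b : ↥(univ : Set M) => ((L.con b : M)))
        (Sum.elim v (fun _ : Fin 1 => a)))
      (xs := (default : Fin 0 → M)))
    exact h3.trans (hψ _)
  have hset : {a : M | θ.Realize (Sum.elim w (fun _ => a))} =
      {a : M | φ.Realize (Sum.elim v (fun _ => a))} := by
    ext a; exact key a
  have := hN w (by rw [hset]; exact hfin)
  rwa [hset] at this

theorem LP.fin_or_cofin
    (hmin : ∀ s : Set M, (Set.univ : Set M).Definable₁ L s → s.Finite ∨ sᶜ.Finite)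
    {α : Type} (φ : L[[(univ : Set M)]].Formula (α ⊕ Fin 1)) (v : α → M) :
    {a : M | φ.Realize (Sum.elim v (fun _ => a))}.Finite ∨
    ({a : M | φ.Realize (Sum.elim v (fun _ => a))})ᶜ.Finite := by
  apply hmin
  let tf : α ⊕ Fin 1 → L[[(univ : Set M)]].Term (Fin 1) := fun x => Sum.elim
      (fun a : α => ((L.con (⟨v a, mem_univ _⟩ : ↥(univ : Set M))).term))
      (fun _ : Fin 1 => Term.var (0 : Fin 1)) x
  refine ⟨φ.subst tf, ?_⟩
  ext x
  have h1 : Formula.Realize (φ.subst tf) x ↔ φ.Realize (fun a => (tf a).realize x) :=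
    BoundedFormula.realize_subst
  have h2 : (fun a => (tf a).realize x) = Sum.elim v (fun _ => x 0) := by
    funext y; rcases y with a | j <;> simp [tf]
  simp only [mem_setOf_eq, h1, h2]

theorem LP.master [Infinite M]
    (hmin : ∀ s : Set M, (Set.univ : Set M).Definable₁ L s → s.Finite ∨ sᶜ.Finite)
    (huniform : ∀ (m : ℕ) (φ : L.Formula (Fin m ⊕ Fin 1)), ∃ N : ℕ,
      ∀ v : Fin m → M,
        {a : M | φ.Realize (Sum.elim v (fun _ => a))}.Finite →
        {a : M | φ.Realize (Sum.elim v (fun _ => a))}.ncard ≤ N) :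
    ∀ (n m : ℕ) (θ : L[[(univ : Set M)]].Formula (Fin m ⊕ Fin n))
      (ε : L[[(univ : Set M)]].Formula (Fin m ⊕ (Fin n ⊕ Fin n))),
    ∃ χ : L[[(univ : Set M)]].Formula (Fin m ⊕ Fin n),
    ∀ t : Fin m → M,
      (∀ x : Fin n → M, θ.Realize (Sum.elim t x) →
        ε.Realize (Sum.elim t (Sum.elim x x))) →
      (∀ x y : Fin n → M, θ.Realize (Sum.elim t x) → θ.Realize (Sum.elim t y) →
        ε.Realize (Sum.elim t (Sum.elim x y)) → ε.Realize (Sum.elim t (Sum.elim y x))) →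
      (∀ x y z : Fin n → M, θ.Realize (Sum.elim t x) → θ.Realize (Sum.elim t y) →
        θ.Realize (Sum.elim t z) → ε.Realize (Sum.elim t (Sum.elim x y)) →
        ε.Realize (Sum.elim t (Sum.elim y z)) → ε.Realize (Sum.elim t (Sum.elim x z))) →
      (∀ y, χ.Realize (Sum.elim t y) → θ.Realize (Sum.elim t y)) ∧
      (∀ x, θ.Realize (Sum.elim t x) → ∃ y, χ.Realize (Sum.elim t y) ∧
        ε.Realize (Sum.elim t (Sum.elim x y))) ∧
      (∀ y, χ.Realize (Sum.elim t y) →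
        {z : Fin n → M | χ.Realize (Sum.elim t z) ∧
          ε.Realize (Sum.elim t (Sum.elim y z))}.Finite) := by
  intro n
  induction n with
  | zero =>
    intro m θ ε
    refine ⟨θ, fun t hrefl _ _ => ⟨fun y h => h, fun x hx => ⟨x, hx, hrefl x hx⟩, ?_⟩⟩
    intro y _
    exact Set.toFinite _
  | succ n IH =>
    intro m θ ε
    classical
    -- index equivalence
    let e : (Fin 1 ⊕ Fin n) ≃ Fin (n+1) := finSumFinEquiv.trans (finCongr (Nat.add_comm 1 n))
    -- point builder
    let pt : M → (Fin n → M) → ((Fin 1 ⊕ Fin n) → M) := fun b y => Sum.elim (fun _ => b) y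
    have hpt0 : ∀ (b : M) (y : Fin n → M), pt b y (Sum.inl 0) = b := fun _ _ => rfl
    have hptp : ∀ p : (Fin 1 ⊕ Fin n) → M, pt (p (Sum.inl 0)) (fun j => p (Sum.inr j)) = p := by
      intro p; funext x; rcases x with u | j
      · simp [pt, Fin.eq_zero u]
      · simp [pt]
    have hpe : ∀ x : Fin (n+1) → M, (x ∘ e) ∘ e.symm = x := by
      intro x; funext i; simp
    have hep : ∀ p : (Fin 1 ⊕ Fin n) → M, (p ∘ e.symm) ∘ e = p := by
      intro p; funext i; simp
    -- relabeled basic formulas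
    let θ' : L[[(univ : Set M)]].Formula (Fin m ⊕ (Fin 1 ⊕ Fin n)) :=
      θ.relabel (Sum.map id e.symm)
    let ε' : L[[(univ : Set M)]].Formula (Fin m ⊕ ((Fin 1 ⊕ Fin n) ⊕ (Fin 1 ⊕ Fin n))) :=
      ε.relabel (Sum.map id (Sum.map e.symm e.symm))
    have hθ' : ∀ (t : Fin m → M) (p : (Fin 1 ⊕ Fin n) → M),
        θ'.Realize (Sum.elim t p) ↔ θ.Realize (Sum.elim t (p ∘ e.symm)) := by
      intro t p
      rw [show θ'.Realize (Sum.elim t p) ↔ θ.Realize (Sum.elim t p ∘ Sum.map id e.symm) from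
        Formula.realize_relabel]
      apply Iff.of_eq; congr 1
      funext x; rcases x with s | i <;> simp
    have hε' : ∀ (t : Fin m → M) (p q : (Fin 1 ⊕ Fin n) → M),
        ε'.Realize (Sum.elim t (Sum.elim p q)) ↔
          ε.Realize (Sum.elim t (Sum.elim (p ∘ e.symm) (q ∘ e.symm))) := by
      intro t p q
      rw [show ε'.Realize (Sum.elim t (Sum.elim p q)) ↔
        ε.Realize (Sum.elim t (Sum.elim p q) ∘ Sum.map id (Sum.map e.symm e.symm)) from
        Formula.realize_relabel]
      apply Iff.of_eq; congr 1
      funext x; rcases x with s | i | i <;> simp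
    -- the B-set membership formula β
    let gθ : (Fin m ⊕ (Fin 1 ⊕ Fin n)) →
        ((Fin m ⊕ (Fin 1 ⊕ Fin n)) ⊕ Fin 1) ⊕ Fin n := fun x => match x with
      | Sum.inl s => Sum.inl (Sum.inl (Sum.inl s))
      | Sum.inr (Sum.inl _) => Sum.inl (Sum.inr 0)
      | Sum.inr (Sum.inr j) => Sum.inr j
    let gε : (Fin m ⊕ ((Fin 1 ⊕ Fin n) ⊕ (Fin 1 ⊕ Fin n))) →
        ((Fin m ⊕ (Fin 1 ⊕ Fin n)) ⊕ Fin 1) ⊕ Fin n := fun x => match x with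
      | Sum.inl s => Sum.inl (Sum.inl (Sum.inl s))
      | Sum.inr (Sum.inl (Sum.inl _)) => Sum.inl (Sum.inr 0)
      | Sum.inr (Sum.inl (Sum.inr j)) => Sum.inr j
      | Sum.inr (Sum.inr q) => Sum.inl (Sum.inl (Sum.inr q))
    let β : L[[(univ : Set M)]].Formula ((Fin m ⊕ (Fin 1 ⊕ Fin n)) ⊕ Fin 1) :=
      ((θ'.relabel gθ) ⊓ (ε'.relabel gε)).iExs
        (Fin n)
    have hβ : ∀ (t : Fin m → M) (p : (Fin 1 ⊕ Fin n) → M) (c : M),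
        β.Realize (Sum.elim (Sum.elim t p) (fun _ => c)) ↔
        ∃ y' : Fin n → M, θ'.Realize (Sum.elim t (pt c y')) ∧
          ε'.Realize (Sum.elim t (Sum.elim (pt c y') p)) := by
      intro t p c
      rw [show β = ((θ'.relabel gθ) ⊓ (ε'.relabel gε)).iExs
        (Fin n) from rfl,
        Formula.realize_iExs]
      apply exists_congr; intro y'
      have h1 : Sum.elim (Sum.elim (Sum.elim t p) fun _ => c) y' ∘ gθ =
          Sum.elim t (pt c y') := by
        funext x; rcases x with s | u | j <;> simp [gθ, pt]
      have h2 : Sum.elim (Sum.elim (Sum.elim t p) fun _ => c) y' ∘ gε =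
          Sum.elim t (Sum.elim (pt c y') p) := by
        funext x; rcases x with s | (u | j) | q <;> simp [gε, pt]
      exact (Formula.realize_inf).trans
        (and_congr (Formula.realize_relabel.trans (by rw [h1]))
          (Formula.realize_relabel.trans (by rw [h2])))
    -- uniform bound for complements of B-sets
    obtain ⟨N₂, hN₂⟩ := LP.uniform_bound huniform β.not
    -- distinctness formula: there exist N₂+1 distinct elements outside the B-set
    let neq : Fin (N₂+1) × Fin (N₂+1) →
        L[[(univ : Set M)]].Formula ((Fin m ⊕ (Fin 1 ⊕ Fin n)) ⊕ Fin (N₂+1)) := fun ij =>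
      Formula.not (Term.equal (Term.var (Sum.inr ij.1)) (Term.var (Sum.inr ij.2)))
    let notB : Fin (N₂+1) →
        L[[(univ : Set M)]].Formula ((Fin m ⊕ (Fin 1 ⊕ Fin n)) ⊕ Fin (N₂+1)) := fun i =>
      β.not.relabel (Sum.map id (fun _ : Fin 1 => i))
    let conj : L[[(univ : Set M)]].Formula ((Fin m ⊕ (Fin 1 ⊕ Fin n)) ⊕ Fin (N₂+1)) :=
      (LP.iInf (Finset.univ.filter
          (fun ij : Fin (N₂+1) × Fin (N₂+1) => ij.1 ≠ ij.2)) neq) ⊓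
        (LP.iInf Finset.univ notB)
    let δ : L[[(univ : Set M)]].Formula (Fin m ⊕ (Fin 1 ⊕ Fin n)) :=
      conj.iExs (Fin (N₂+1))
    have hδ : ∀ (t : Fin m → M) (p : (Fin 1 ⊕ Fin n) → M),
        δ.Realize (Sum.elim t p) ↔ ∃ w : Fin (N₂+1) → M,
          Function.Injective w ∧
          ∀ i, ¬ β.Realize (Sum.elim (Sum.elim t p) (fun _ => w i)) := by
      intro t p
      rw [show δ = conj.iExs (Fin (N₂+1)) from rfl,
        Formula.realize_iExs]
      apply exists_congr; intro w
      rw [show conj = (LP.iInf (Finset.univ.filter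
          (fun ij : Fin (N₂+1) × Fin (N₂+1) => ij.1 ≠ ij.2)) neq) ⊓
        (LP.iInf Finset.univ notB) from rfl,
        Formula.realize_inf, LP.realize_iInf', LP.realize_iInf']
      apply and_congr
      · constructor
        · intro h i j hij
          by_contra hne
          have := h (i, j) (by simp [hne])
          simp only [neq] at this
          rw [Formula.realize_not, Formula.realize_equal] at this
          exact this (by simpa using hij)
        · intro h ij hij
          simp only [Finset.mem_filter] at hij
          simpa [neq] using h.ne hij.2
      · constructor
        · intro h i
          have := h i (Finset.mem_univ i)
          rw [show notB i = β.not.relabel (Sum.map id (fun _ : Fin 1 => i)) from rfl,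
            Formula.realize_relabel] at this
          rw [show Sum.elim (Sum.elim t p) w ∘ Sum.map id (fun _ : Fin 1 => i) =
            Sum.elim (Sum.elim t p) (fun _ : Fin 1 => w i) from by
              funext x; rcases x with s | u <;> simp] at this
          exact this
        · intro h i _
          rw [show notB i = β.not.relabel (Sum.map id (fun _ : Fin 1 => i)) from rfl,
            Formula.realize_relabel,
            show Sum.elim (Sum.elim t p) w ∘ Sum.map id (fun _ : Fin 1 => i) =
            Sum.elim (Sum.elim t p) (fun _ : Fin 1 => w i) from by
              funext x; rcases x with s | u <;> simp]
          exact h i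
    -- counting helper
    have hcount : ∀ S : Set M, S.Finite → S.ncard ≤ N₂ →
        ∀ w : Fin (N₂+1) → M, Function.Injective w → ¬(∀ i, w i ∈ S) := by
      intro S hfin hcard w hw hmem
      have h1 : (Finset.univ.image w).card = N₂ + 1 := by
        rw [Finset.card_image_of_injective _ hw, Finset.card_univ, Fintype.card_fin]
      have h2 : ((Finset.univ.image w : Finset M) : Set M) ⊆ S := by
        intro a ha
        simp only [Finset.coe_image, Finset.coe_univ, Set.image_univ] at ha
        obtain ⟨i, rfl⟩ := ha
        exact hmem i
      have := Set.ncard_le_ncard h2 hfin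
      rw [Set.ncard_coe_finset, h1] at this
      omega
    -- semantic B-set and case dichotomy
    have hCBiff : ∀ (t : Fin m → M) (p : (Fin 1 ⊕ Fin n) → M),
        (¬ δ.Realize (Sum.elim t p)) ↔
        ({c : M | β.Realize (Sum.elim (Sum.elim t p) (fun _ => c))})ᶜ.Finite := by
      intro t p
      constructor
      · intro hnd
        by_contra hinf
        apply hnd
        rw [hδ]
        have hinf' : ({c : M | β.Realize (Sum.elim (Sum.elim t p) (fun _ => c))})ᶜ.Infinite := hinf
        let emb := hinf'.natEmbedding
        refine ⟨fun i => ↑(emb i.val), fun i j hij => ?_, fun i => (emb i.val).2⟩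
        exact Fin.val_injective (emb.injective (Subtype.ext hij))
      · intro hfin
        intro hd
        rw [hδ] at hd
        obtain ⟨w, hw, hmem⟩ := hd
        have hsub : ({c : M | β.Realize (Sum.elim (Sum.elim t p) (fun _ => c))})ᶜ =
            {a : M | β.not.Realize (Sum.elim (Sum.elim t p) (fun _ => a))} := by
          ext a; simp [Set.mem_compl_iff]
        have hcard := hN₂ (Sum.elim t p) (by rw [← hsub]; exact hfin)
        rw [← hsub] at hcard
        exact hcount _ hfin hcard w hw (fun i => hmem i)
    -- in the non-cofinite case, the B-set itself is finite
    have hCAfin : ∀ (t : Fin m → M) (p : (Fin 1 ⊕ Fin n) → M),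
        δ.Realize (Sum.elim t p) →
        ({c : M | β.Realize (Sum.elim (Sum.elim t p) (fun _ => c))}).Finite := by
      intro t p hd
      rcases LP.fin_or_cofin hmin β (Sum.elim t p) with h | h
      · exact h
      · exact absurd hd ((hCBiff t p).mpr h)
    -- === Case A: apply IH with an extra parameter (the distinguished coordinate) ===
    let gA : (Fin m ⊕ (Fin 1 ⊕ Fin n)) → (Fin (m+1) ⊕ Fin n) := fun x => match x with
      | Sum.inl s => Sum.inl (finSumFinEquiv (Sum.inl s))
      | Sum.inr (Sum.inl _) => Sum.inl (finSumFinEquiv (Sum.inr 0))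
      | Sum.inr (Sum.inr j) => Sum.inr j
    let gAε : (Fin m ⊕ ((Fin 1 ⊕ Fin n) ⊕ (Fin 1 ⊕ Fin n))) → (Fin (m+1) ⊕ (Fin n ⊕ Fin n)) :=
      fun x => match x with
      | Sum.inl s => Sum.inl (finSumFinEquiv (Sum.inl s))
      | Sum.inr (Sum.inl (Sum.inl _)) => Sum.inl (finSumFinEquiv (Sum.inr 0))
      | Sum.inr (Sum.inl (Sum.inr j)) => Sum.inr (Sum.inl j)
      | Sum.inr (Sum.inr (Sum.inl _)) => Sum.inl (finSumFinEquiv (Sum.inr 0))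
      | Sum.inr (Sum.inr (Sum.inr j)) => Sum.inr (Sum.inr j)
    let θA : L[[(univ : Set M)]].Formula (Fin (m+1) ⊕ Fin n) := (θ' ⊓ δ).relabel gA
    let εA : L[[(univ : Set M)]].Formula (Fin (m+1) ⊕ (Fin n ⊕ Fin n)) := ε'.relabel gAε
    obtain ⟨χA, hχA⟩ := IH (m+1) θA εA
    let par : (Fin m → M) → M → (Fin (m+1) → M) := fun t b =>
      Sum.elim t (fun _ : Fin 1 => b) ∘ finSumFinEquiv.symm
    have hθA : ∀ (t : Fin m → M) (b : M) (y : Fin n → M),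
        θA.Realize (Sum.elim (par t b) y) ↔
        (θ'.Realize (Sum.elim t (pt b y)) ∧ δ.Realize (Sum.elim t (pt b y))) := by
      intro t b y
      have h1 : Sum.elim (par t b) y ∘ gA = Sum.elim t (pt b y) := by
        funext x; rcases x with s | u | j <;> simp [gA, par, pt]
      exact (Formula.realize_relabel.trans (by rw [h1])).trans Formula.realize_inf
    have hεA : ∀ (t : Fin m → M) (b : M) (y y' : Fin n → M),
        εA.Realize (Sum.elim (par t b) (Sum.elim y y')) ↔
        ε'.Realize (Sum.elim t (Sum.elim (pt b y) (pt b y'))) := by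
      intro t b y y'
      have h1 : Sum.elim (par t b) (Sum.elim y y') ∘ gAε =
          Sum.elim t (Sum.elim (pt b y) (pt b y')) := by
        funext x; rcases x with s | (u | j) | (u | j) <;> simp [gAε, par, pt]
      exact Formula.realize_relabel.trans (by rw [h1])
    let gA' : (Fin (m+1) ⊕ Fin n) → (Fin m ⊕ (Fin 1 ⊕ Fin n)) := fun x => match x with
      | Sum.inl s => Sum.elim (fun s' => Sum.inl s')
          (fun _ => Sum.inr (Sum.inl 0)) (finSumFinEquiv.symm s)
      | Sum.inr j => Sum.inr (Sum.inr j)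
    let ξA : L[[(univ : Set M)]].Formula (Fin m ⊕ (Fin 1 ⊕ Fin n)) := χA.relabel gA'
    have hξA : ∀ (t : Fin m → M) (p : (Fin 1 ⊕ Fin n) → M),
        ξA.Realize (Sum.elim t p) ↔
        χA.Realize (Sum.elim (par t (p (Sum.inl 0))) (fun j => p (Sum.inr j))) := by
      intro t p
      have h1 : Sum.elim t p ∘ gA' =
          Sum.elim (par t (p (Sum.inl 0))) (fun j => p (Sum.inr j)) := by
        funext x
        rcases x with s | j
        · rcases hs : finSumFinEquiv.symm s with s' | u
          · simp [gA', par, hs]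
          · simp [gA', par, hs, Fin.eq_zero u]
        · simp [gA']
      exact Formula.realize_relabel.trans (by rw [h1])
    -- === Case B: finitely many substituted instances ===
    let q : Fin (N₂+1) → M := fun i => (Infinite.natEmbedding M) i.val
    have hqinj : Function.Injective q := fun i j hij =>
      Fin.val_injective ((Infinite.natEmbedding M).injective hij)
    let cq : Fin (N₂+1) → L[[(univ : Set M)]].Constants := fun i =>
      L.con (⟨q i, mem_univ _⟩ : ↥(univ : Set M))
    let tfθ : Fin (N₂+1) → ((Fin m ⊕ (Fin 1 ⊕ Fin n)) →
        L[[(univ : Set M)]].Term (Fin m ⊕ Fin n)) := fun i x => match x with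
      | Sum.inl s => Term.var (Sum.inl s)
      | Sum.inr (Sum.inl _) => (cq i).term
      | Sum.inr (Sum.inr j) => Term.var (Sum.inr j)
    let θB : Fin (N₂+1) → L[[(univ : Set M)]].Formula (Fin m ⊕ Fin n) := fun i =>
      (θ' ⊓ δ.not).subst (tfθ i)
    let tfε : Fin (N₂+1) → ((Fin m ⊕ ((Fin 1 ⊕ Fin n) ⊕ (Fin 1 ⊕ Fin n))) →
        L[[(univ : Set M)]].Term (Fin m ⊕ (Fin n ⊕ Fin n))) := fun i x => match x with
      | Sum.inl s => Term.var (Sum.inl s)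
      | Sum.inr (Sum.inl (Sum.inl _)) => (cq i).term
      | Sum.inr (Sum.inl (Sum.inr j)) => Term.var (Sum.inr (Sum.inl j))
      | Sum.inr (Sum.inr (Sum.inl _)) => (cq i).term
      | Sum.inr (Sum.inr (Sum.inr j)) => Term.var (Sum.inr (Sum.inr j))
    let εB : Fin (N₂+1) → L[[(univ : Set M)]].Formula (Fin m ⊕ (Fin n ⊕ Fin n)) := fun i =>
      ε'.subst (tfε i)
    have hIHB := fun i => IH m (θB i) (εB i)
    choose χB hχB using hIHB
    have hθB : ∀ (i : Fin (N₂+1)) (t : Fin m → M) (y : Fin n → M),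
        (θB i).Realize (Sum.elim t y) ↔
        (θ'.Realize (Sum.elim t (pt (q i) y)) ∧ ¬ δ.Realize (Sum.elim t (pt (q i) y))) := by
      intro i t y
      have h1 : (fun a => ((tfθ i) a).realize (Sum.elim t y)) = Sum.elim t (pt (q i) y) := by
        funext x; rcases x with s | u | j <;> simp [tfθ, pt, cq, q]
      refine (LP.realize_subst' _ _ _).trans ?_
      rw [h1, Formula.realize_inf, Formula.realize_not]
    have hεB : ∀ (i : Fin (N₂+1)) (t : Fin m → M) (y y' : Fin n → M),
        (εB i).Realize (Sum.elim t (Sum.elim y y')) ↔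
        ε'.Realize (Sum.elim t (Sum.elim (pt (q i) y) (pt (q i) y'))) := by
      intro i t y y'
      have h1 : (fun a => ((tfε i) a).realize (Sum.elim t (Sum.elim y y'))) =
          Sum.elim t (Sum.elim (pt (q i) y) (pt (q i) y')) := by
        funext x; rcases x with s | (u | j) | (u | j) <;> simp [tfε, pt, cq, q]
      refine (LP.realize_subst' _ _ _).trans ?_
      rw [h1]
    let eqb : Fin (N₂+1) → L[[(univ : Set M)]].Formula (Fin m ⊕ (Fin 1 ⊕ Fin n)) := fun i =>
      Term.equal (Term.var (Sum.inr (Sum.inl 0))) ((cq i).term)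
    let ξB : L[[(univ : Set M)]].Formula (Fin m ⊕ (Fin 1 ⊕ Fin n)) :=
      LP.iSup Finset.univ
        (fun i => eqb i ⊓ (χB i).relabel (Sum.map id Sum.inr))
    have hξB : ∀ (t : Fin m → M) (p : (Fin 1 ⊕ Fin n) → M),
        ξB.Realize (Sum.elim t p) ↔
        ∃ i, p (Sum.inl 0) = q i ∧ (χB i).Realize (Sum.elim t (fun j => p (Sum.inr j))) := by
      intro t p
      rw [show ξB = LP.iSup Finset.univ
        (fun i => eqb i ⊓ (χB i).relabel (Sum.map id Sum.inr)) from rfl, LP.realize_iSup']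
      constructor
      · rintro ⟨i, _, hi⟩
        rw [Formula.realize_inf] at hi
        obtain ⟨h1, h2⟩ := hi
        refine ⟨i, ?_, ?_⟩
        · have := h1
          rw [show eqb i = Term.equal (Term.var (Sum.inr (Sum.inl 0))) ((cq i).term) from rfl,
            Formula.realize_equal] at this
          simpa [cq, q] using this
        · rw [Formula.realize_relabel] at h2
          have h3 : Sum.elim t p ∘ Sum.map id Sum.inr = Sum.elim t (fun j => p (Sum.inr j)) := by
            funext x; rcases x with s | j <;> simp
          rwa [h3] at h2
      · rintro ⟨i, h1, h2⟩
        refine ⟨i, Finset.mem_univ i, ?_⟩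
        rw [Formula.realize_inf]
        constructor
        · rw [show eqb i = Term.equal (Term.var (Sum.inr (Sum.inl 0))) ((cq i).term) from rfl,
            Formula.realize_equal]
          simpa [cq, q] using h1
        · rw [Formula.realize_relabel]
          have h3 : Sum.elim t p ∘ Sum.map id Sum.inr = Sum.elim t (fun j => p (Sum.inr j)) := by
            funext x; rcases x with s | j <;> simp
          rwa [h3]
    -- === assembled candidate ===
    let χ' : L[[(univ : Set M)]].Formula (Fin m ⊕ (Fin 1 ⊕ Fin n)) := ξA ⊔ ξB
    let χfin : L[[(univ : Set M)]].Formula (Fin m ⊕ Fin (n+1)) := χ'.relabel (Sum.map id e)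
    have hχfin : ∀ (t : Fin m → M) (x : Fin (n+1) → M),
        χfin.Realize (Sum.elim t x) ↔ χ'.Realize (Sum.elim t (x ∘ e)) := by
      intro t x
      have h1 : Sum.elim t x ∘ Sum.map id e = Sum.elim t (x ∘ e) := by
        funext z; rcases z with s | j <;> simp
      exact Formula.realize_relabel.trans (by rw [h1])
    have hχ' : ∀ (t : Fin m → M) (p : (Fin 1 ⊕ Fin n) → M),
        χ'.Realize (Sum.elim t p) ↔ (ξA.Realize (Sum.elim t p) ∨ ξB.Realize (Sum.elim t p)) :=
      fun t p => Formula.realize_sup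
    refine ⟨χfin, ?_⟩
    intro t hrefl hsymm htrans
    -- primed versions of the hypotheses
    have refl' : ∀ p, θ'.Realize (Sum.elim t p) → ε'.Realize (Sum.elim t (Sum.elim p p)) := by
      intro p hp
      rw [hθ'] at hp
      rw [hε']
      exact hrefl _ hp
    have symm' : ∀ p r, θ'.Realize (Sum.elim t p) → θ'.Realize (Sum.elim t r) →
        ε'.Realize (Sum.elim t (Sum.elim p r)) → ε'.Realize (Sum.elim t (Sum.elim r p)) := by
      intro p r hp hr hpr
      rw [hθ'] at hp hr
      rw [hε'] at hpr ⊢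
      exact hsymm _ _ hp hr hpr
    have trans' : ∀ p r s, θ'.Realize (Sum.elim t p) → θ'.Realize (Sum.elim t r) →
        θ'.Realize (Sum.elim t s) → ε'.Realize (Sum.elim t (Sum.elim p r)) →
        ε'.Realize (Sum.elim t (Sum.elim r s)) → ε'.Realize (Sum.elim t (Sum.elim p s)) := by
      intro p r s hp hr hs hpr hrs
      rw [hθ'] at hp hr hs
      rw [hε'] at hpr hrs ⊢
      exact htrans _ _ _ hp hr hs hpr hrs
    -- B-set invariance along the equivalence relation
    have hBinv : ∀ p r, θ'.Realize (Sum.elim t p) → θ'.Realize (Sum.elim t r) →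
        ε'.Realize (Sum.elim t (Sum.elim p r)) →
        {c : M | β.Realize (Sum.elim (Sum.elim t p) (fun _ => c))} =
        {c : M | β.Realize (Sum.elim (Sum.elim t r) (fun _ => c))} := by
      intro p r hp hr hpr
      ext c
      simp only [mem_setOf_eq, hβ]
      constructor
      · rintro ⟨y', h1, h2⟩
        exact ⟨y', h1, trans' _ _ _ h1 hp hr h2 hpr⟩
      · rintro ⟨y', h1, h2⟩
        exact ⟨y', h1, trans' _ _ _ h1 hr hp h2 (symm' _ _ hp hr hpr)⟩
    -- derived IH hypotheses for case A at any parameter (t, b)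
    have hypA : ∀ b : M,
        (∀ y, χA.Realize (Sum.elim (par t b) y) → θA.Realize (Sum.elim (par t b) y)) ∧
        (∀ y, θA.Realize (Sum.elim (par t b) y) → ∃ y', χA.Realize (Sum.elim (par t b) y') ∧
          εA.Realize (Sum.elim (par t b) (Sum.elim y y'))) ∧
        (∀ y, χA.Realize (Sum.elim (par t b) y) →
          {z : Fin n → M | χA.Realize (Sum.elim (par t b) z) ∧
            εA.Realize (Sum.elim (par t b) (Sum.elim y z))}.Finite) := by
      intro b
      apply hχA (par t b)
      · intro y hy
        rw [hθA] at hy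
        rw [hεA]
        exact refl' _ hy.1
      · intro y y' hy hy'
        rw [hθA] at hy hy'
        rw [hεA, hεA]
        exact symm' _ _ hy.1 hy'.1
      · intro y y' y'' hy hy' hy''
        rw [hθA] at hy hy' hy''
        rw [hεA, hεA, hεA]
        exact trans' _ _ _ hy.1 hy'.1 hy''.1
    -- derived IH hypotheses for case B at parameter t, for each i
    have hypB : ∀ i : Fin (N₂+1),
        (∀ y, (χB i).Realize (Sum.elim t y) → (θB i).Realize (Sum.elim t y)) ∧
        (∀ y, (θB i).Realize (Sum.elim t y) → ∃ y', (χB i).Realize (Sum.elim t y') ∧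
          (εB i).Realize (Sum.elim t (Sum.elim y y'))) ∧
        (∀ y, (χB i).Realize (Sum.elim t y) →
          {z : Fin n → M | (χB i).Realize (Sum.elim t z) ∧
            (εB i).Realize (Sum.elim t (Sum.elim y z))}.Finite) := by
      intro i
      apply hχB i t
      · intro y hy
        rw [hθB] at hy
        rw [hεB]
        exact refl' _ hy.1
      · intro y y' hy hy'
        rw [hθB] at hy hy'
        rw [hεB, hεB]
        exact symm' _ _ hy.1 hy'.1
      · intro y y' y'' hy hy' hy''
        rw [hθB] at hy hy' hy''
        rw [hεB, hεB, hεB]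
        exact trans' _ _ _ hy.1 hy'.1 hy''.1
    -- Y' ⊆ X'
    have YsubX' : ∀ p, χ'.Realize (Sum.elim t p) → θ'.Realize (Sum.elim t p) := by
      intro p hp
      rw [hχ'] at hp
      rcases hp with hp | hp
      · rw [hξA] at hp
        have h1 := ((hypA (p (Sum.inl 0))).1 _ hp)
        rw [hθA] at h1
        rw [← hptp p]
        exact h1.1
      · rw [hξB] at hp
        obtain ⟨i, hqi, hp⟩ := hp
        have h1 := ((hypB i).1 _ hp)
        rw [hθB] at h1
        have h2 := h1.1
        rw [show pt (q i) (fun j => p (Sum.inr j)) = p from by rw [← hqi]; exact hptp p] at h2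
        exact h2
    -- case A points of Y'
    have YAcaseA : ∀ p, ξA.Realize (Sum.elim t p) → δ.Realize (Sum.elim t p) := by
      intro p hp
      rw [hξA] at hp
      have h1 := ((hypA (p (Sum.inl 0))).1 _ hp)
      rw [hθA] at h1
      have := h1.2
      rwa [hptp p] at this
    -- case B points of Y'
    have YBcaseB : ∀ p, ξB.Realize (Sum.elim t p) → ¬ δ.Realize (Sum.elim t p) := by
      intro p hp
      rw [hξB] at hp
      obtain ⟨i, hqi, hp⟩ := hp
      have h1 := ((hypB i).1 _ hp)
      rw [hθB] at h1
      have := h1.2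
      rwa [show pt (q i) (fun j => p (Sum.inr j)) = p from by rw [← hqi]; exact hptp p] at this
    -- meets every class
    have Meets' : ∀ p, θ'.Realize (Sum.elim t p) →
        ∃ r, χ'.Realize (Sum.elim t r) ∧ ε'.Realize (Sum.elim t (Sum.elim p r)) := by
      intro p hp
      by_cases hc : δ.Realize (Sum.elim t p)
      · -- case A
        have hθAp : θA.Realize (Sum.elim (par t (p (Sum.inl 0))) (fun j => p (Sum.inr j))) := by
          rw [hθA, hptp p]
          exact ⟨hp, hc⟩
        obtain ⟨y', hy', hR⟩ := (hypA (p (Sum.inl 0))).2.1 _ hθAp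
        rw [hεA, hptp p] at hR
        refine ⟨pt (p (Sum.inl 0)) y', ?_, hR⟩
        rw [hχ']
        left
        rw [hξA]
        have h0 : pt (p (Sum.inl 0)) y' (Sum.inl 0) = p (Sum.inl 0) := rfl
        rw [h0]
        have h1 : (fun j => pt (p (Sum.inl 0)) y' (Sum.inr j)) = y' := rfl
        rw [h1]
        exact hy'
      · -- case B
        have hfin : ({c : M | β.Realize (Sum.elim (Sum.elim t p) (fun _ => c))})ᶜ.Finite :=
          (hCBiff t p).mp hc
        have hcard : ({c : M | β.Realize (Sum.elim (Sum.elim t p) (fun _ => c))})ᶜ.ncard ≤ N₂ := by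
          have hsub : ({c : M | β.Realize (Sum.elim (Sum.elim t p) (fun _ => c))})ᶜ =
              {a : M | β.not.Realize (Sum.elim (Sum.elim t p) (fun _ => a))} := by
            ext a; simp [Set.mem_compl_iff]
          rw [hsub]
          exact hN₂ (Sum.elim t p) (by rw [← hsub]; exact hfin)
        have hqmem : ∃ i, β.Realize (Sum.elim (Sum.elim t p) (fun _ => q i)) := by
          by_contra hno
          push_neg at hno
          exact hcount _ hfin hcard q hqinj (fun i => hno i)
        obtain ⟨i, hBi⟩ := hqmem
        rw [hβ] at hBi
        obtain ⟨y', hXy', hRy'⟩ := hBi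
        -- the class of p is case B, hence so is the class of pt (q i) y'
        have hCBpt : ¬ δ.Realize (Sum.elim t (pt (q i) y')) := by
          apply (hCBiff t (pt (q i) y')).mpr
          rw [hBinv _ _ hXy' hp hRy']
          exact (hCBiff t p).mp hc
        have hθBy' : (θB i).Realize (Sum.elim t y') := by
          rw [hθB]
          exact ⟨hXy', hCBpt⟩
        obtain ⟨y'', hy'', hRy''⟩ := (hypB i).2.1 _ hθBy'
        rw [hεB] at hRy''
        have hXy'' : θ'.Realize (Sum.elim t (pt (q i) y'')) := by
          have h1 := (hypB i).1 _ hy''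
          rw [hθB] at h1
          exact h1.1
        refine ⟨pt (q i) y'', ?_, ?_⟩
        · rw [hχ']
          right
          rw [hξB]
          exact ⟨i, rfl, hy''⟩
        · -- R' p (pt (q i) y'')
          apply trans' _ (pt (q i) y') _ hp hXy' hXy''
          · exact symm' _ _ hXy' hp hRy'
          · exact hRy''
    -- classes of Y' are finite
    have Fin' : ∀ p₀, χ'.Realize (Sum.elim t p₀) →
        {r : (Fin 1 ⊕ Fin n) → M | χ'.Realize (Sum.elim t r) ∧
          ε'.Realize (Sum.elim t (Sum.elim p₀ r))}.Finite := by
      intro p₀ hp₀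
      have hXp₀ : θ'.Realize (Sum.elim t p₀) := YsubX' _ hp₀
      -- case B part
      have TBfin : ∀ i : Fin (N₂+1),
          {y : Fin n → M | (χB i).Realize (Sum.elim t y) ∧
            ε'.Realize (Sum.elim t (Sum.elim p₀ (pt (q i) y)))}.Finite := by
        intro i
        rcases Set.eq_empty_or_nonempty {y : Fin n → M | (χB i).Realize (Sum.elim t y) ∧
            ε'.Realize (Sum.elim t (Sum.elim p₀ (pt (q i) y)))} with hT | ⟨y₁, hy₁⟩
        · rw [hT]; exact Set.finite_empty
        · apply Set.Finite.subset ((hypB i).2.2 y₁ hy₁.1)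
          intro y hy
          have hXy₁ : θ'.Realize (Sum.elim t (pt (q i) y₁)) := by
            have h1 := (hypB i).1 _ hy₁.1; rw [hθB] at h1; exact h1.1
          have hXy : θ'.Realize (Sum.elim t (pt (q i) y)) := by
            have h1 := (hypB i).1 _ hy.1; rw [hθB] at h1; exact h1.1
          refine ⟨hy.1, ?_⟩
          rw [hεB]
          exact trans' _ p₀ _ hXy₁ hXp₀ hXy (symm' _ _ hXp₀ hXy₁ hy₁.2) hy.2
      have SBfin : {r : (Fin 1 ⊕ Fin n) → M | ξB.Realize (Sum.elim t r) ∧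
          ε'.Realize (Sum.elim t (Sum.elim p₀ r))}.Finite := by
        apply Set.Finite.subset (Set.finite_iUnion (fun i : Fin (N₂+1) =>
          ((TBfin i).image (pt (q i)))))
        intro r hr
        obtain ⟨hξ, hR⟩ := hr
        rw [hξB] at hξ
        obtain ⟨i, hqi, hχBr⟩ := hξ
        have hpteq : pt (q i) (fun j => r (Sum.inr j)) = r := by rw [← hqi]; exact hptp r
        refine Set.mem_iUnion.mpr ⟨i, ⟨fun j => r (Sum.inr j), ⟨hχBr, ?_⟩, hpteq⟩⟩
        rw [hpteq]
        exact hR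
      -- case A part
      have TAfin : ∀ b : M,
          {y : Fin n → M | χA.Realize (Sum.elim (par t b) y) ∧
            ε'.Realize (Sum.elim t (Sum.elim p₀ (pt b y)))}.Finite := by
        intro b
        rcases Set.eq_empty_or_nonempty {y : Fin n → M | χA.Realize (Sum.elim (par t b) y) ∧
            ε'.Realize (Sum.elim t (Sum.elim p₀ (pt b y)))} with hT | ⟨y₁, hy₁⟩
        · rw [hT]; exact Set.finite_empty
        · apply Set.Finite.subset ((hypA b).2.2 y₁ hy₁.1)
          intro y hy
          have hXy₁ : θ'.Realize (Sum.elim t (pt b y₁)) := by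
            have h1 := (hypA b).1 _ hy₁.1; rw [hθA] at h1; exact h1.1
          have hXy : θ'.Realize (Sum.elim t (pt b y)) := by
            have h1 := (hypA b).1 _ hy.1; rw [hθA] at h1; exact h1.1
          refine ⟨hy.1, ?_⟩
          rw [hεA]
          exact trans' _ p₀ _ hXy₁ hXp₀ hXy (symm' _ _ hXp₀ hXy₁ hy₁.2) hy.2
      have SAfin : {r : (Fin 1 ⊕ Fin n) → M | ξA.Realize (Sum.elim t r) ∧
          ε'.Realize (Sum.elim t (Sum.elim p₀ r))}.Finite := by
        rcases Set.eq_empty_or_nonempty {r : (Fin 1 ⊕ Fin n) → M | ξA.Realize (Sum.elim t r) ∧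
            ε'.Realize (Sum.elim t (Sum.elim p₀ r))} with hS | ⟨pw, hpw⟩
        · rw [hS]; exact Set.finite_empty
        · have hXpw : θ'.Realize (Sum.elim t pw) := by
            apply YsubX'
            rw [hχ']
            exact Or.inl hpw.1
          have hBSfin : ({c : M | β.Realize (Sum.elim (Sum.elim t p₀) (fun _ => c))}).Finite := by
            rw [hBinv p₀ pw hXp₀ hXpw hpw.2]
            exact hCAfin t pw (YAcaseA pw hpw.1)
          apply Set.Finite.subset (Set.Finite.biUnion hBSfin
            (fun c _ => ((TAfin c).image (pt c))))
          intro r hr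
          obtain ⟨hξ, hR⟩ := hr
          have hχ'r : χ'.Realize (Sum.elim t r) := by rw [hχ']; exact Or.inl hξ
          have hXr : θ'.Realize (Sum.elim t r) := YsubX' _ hχ'r
          have hpteq : pt (r (Sum.inl 0)) (fun j => r (Sum.inr j)) = r := hptp r
          have hbmem : r (Sum.inl 0) ∈
              {c : M | β.Realize (Sum.elim (Sum.elim t p₀) (fun _ => c))} := by
            rw [mem_setOf_eq, hβ]
            refine ⟨fun j => r (Sum.inr j), ?_, ?_⟩
            · rw [hpteq]; exact hXr
            · rw [hpteq]; exact symm' _ _ hXp₀ hXr hR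
          rw [hξA] at hξ
          refine Set.mem_biUnion hbmem ⟨fun j => r (Sum.inr j), ⟨hξ, ?_⟩, hpteq⟩
          rw [hpteq]
          exact hR
      apply Set.Finite.subset (SAfin.union SBfin)
      intro r hr
      obtain ⟨hχ'r, hR⟩ := hr
      rw [hχ'] at hχ'r
      rcases hχ'r with h | h
      · exact Or.inl ⟨h, hR⟩
      · exact Or.inr ⟨h, hR⟩
    -- transfer back to Fin (n+1)
    refine ⟨?_, ?_, ?_⟩
    · intro x hx
      rw [hχfin] at hx
      have h1 := YsubX' _ hx
      rw [hθ'] at h1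
      rwa [hpe x] at h1
    · intro x hx
      have hx' : θ'.Realize (Sum.elim t (x ∘ e)) := by
        rw [hθ', hpe x]
        exact hx
      obtain ⟨r, hr, hR⟩ := Meets' _ hx'
      refine ⟨r ∘ e.symm, ?_, ?_⟩
      · rw [hχfin, hep r]
        exact hr
      · rw [hε', hpe x] at hR
        exact hR
    · intro x hx
      rw [hχfin] at hx
      have hfin := Fin' _ hx
      apply Set.Finite.of_finite_image (f := fun z : Fin (n+1) → M => z ∘ e)
      · apply Set.Finite.subset hfin
        rintro _ ⟨z, hz, rfl⟩
        refine ⟨?_, ?_⟩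
        · rw [← hχfin]; exact hz.1
        · rw [hε', hpe x, hpe z]
          exact hz.2
      · intro z₁ _ z₂ _ h
        funext i
        have := congrFun h (e.symm i)
        simpa using this


end LPAux

/-- Lascar–Pillay: in a strongly minimal structure `M` with
`acl(∅) ∩ M ≠ ∅`, every definable equivalence relation `E` on a definable set
`X₀ ⊆ Mⁿ` admits a definable subset `Y₀ ⊆ X₀` meeting every `E`-class and all of whose
`E`-classes are finite. -/
theorem lascar_pillay_finite_classes {L : FirstOrder.Language.{u, v}} {M : Type w} [L.Structure M]
    [Infinite M]
    -- strong minimality: every definable (with parameters) subset of M is finite or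
    -- cofinite, uniformly in the parameters
    (hmin : ∀ s : Set M, (Set.univ : Set M).Definable₁ L s → s.Finite ∨ sᶜ.Finite)
    (huniform : ∀ (m : ℕ) (φ : L.Formula (Fin m ⊕ Fin 1)), ∃ N : ℕ,
      ∀ v : Fin m → M,
        {a : M | φ.Realize (Sum.elim v (fun _ => a))}.Finite →
        {a : M | φ.Realize (Sum.elim v (fun _ => a))}.ncard ≤ N)
    -- acl(∅) ∩ M ≠ ∅
    (hacl : ∃ (a : M) (s : Set M), (∅ : Set M).Definable₁ L s ∧ s.Finite ∧ a ∈ s)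
    (n : ℕ) (X₀ : Set (Fin n → M)) (hX₀ : (Set.univ : Set M).Definable L X₀)
    (E : Set (Fin n ⊕ Fin n → M)) (hE : (Set.univ : Set M).Definable L E)
    (R : (Fin n → M) → (Fin n → M) → Prop)
    (hR : ∀ x y, R x y ↔ Sum.elim x y ∈ E)
    (hrefl : ∀ x ∈ X₀, R x x)
    (hsymm : ∀ x ∈ X₀, ∀ y ∈ X₀, R x y → R y x)
    (htrans : ∀ x ∈ X₀, ∀ y ∈ X₀, ∀ z ∈ X₀, R x y → R y z → R x z) :
    ∃ Y₀ : Set (Fin n → M), (Set.univ : Set M).Definable L Y₀ ∧ Y₀ ⊆ X₀ ∧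
      (∀ x ∈ X₀, ∃ y ∈ Y₀, R x y) ∧
      ∀ y ∈ Y₀, {z | z ∈ Y₀ ∧ R y z}.Finite := by
  classical
  obtain ⟨φX, hφX⟩ := hX₀
  obtain ⟨φE, hφE⟩ := hE
  let θ : L[[(Set.univ : Set M)]].Formula (Fin 0 ⊕ Fin n) :=
    φX.relabel (Sum.inr : Fin n → Fin 0 ⊕ Fin n)
  let ε : L[[(Set.univ : Set M)]].Formula (Fin 0 ⊕ (Fin n ⊕ Fin n)) :=
    φE.relabel (Sum.inr : (Fin n ⊕ Fin n) → Fin 0 ⊕ (Fin n ⊕ Fin n))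
  obtain ⟨χ, hχ⟩ := LP.master hmin huniform n 0 θ ε
  let t : Fin 0 → M := Fin.elim0
  have hθR : ∀ x : Fin n → M, θ.Realize (Sum.elim t x) ↔ x ∈ X₀ := by
    intro x
    have h1 : Sum.elim t x ∘ (Sum.inr : Fin n → Fin 0 ⊕ Fin n) = x := by
      funext j; rfl
    rw [show θ = φX.relabel (Sum.inr : Fin n → Fin 0 ⊕ Fin n) from rfl,
      FirstOrder.Language.Formula.realize_relabel, h1, hφX]
    rfl
  have hεR : ∀ x y : Fin n → M, ε.Realize (Sum.elim t (Sum.elim x y)) ↔ R x y := by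
    intro x y
    have h1 : Sum.elim t (Sum.elim x y) ∘
        (Sum.inr : (Fin n ⊕ Fin n) → Fin 0 ⊕ (Fin n ⊕ Fin n)) = Sum.elim x y := by
      funext j; rfl
    rw [show ε = φE.relabel (Sum.inr : (Fin n ⊕ Fin n) → Fin 0 ⊕ (Fin n ⊕ Fin n)) from rfl,
      FirstOrder.Language.Formula.realize_relabel, h1, hR]
    rw [hφE]
    rfl
  obtain ⟨hsub, hmeets, hfin⟩ := hχ t
    (fun x hx => (hεR x x).mpr (hrefl x ((hθR x).mp hx)))
    (fun x y hx hy hxy => (hεR y x).mpr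
      (hsymm x ((hθR x).mp hx) y ((hθR y).mp hy) ((hεR x y).mp hxy)))
    (fun x y z hx hy hz hxy hyz => (hεR x z).mpr
      (htrans x ((hθR x).mp hx) y ((hθR y).mp hy) z ((hθR z).mp hz)
        ((hεR x y).mp hxy) ((hεR y z).mp hyz)))
  refine ⟨{y : Fin n → M | χ.Realize (Sum.elim t y)}, ?_, ?_, ?_, ?_⟩
  · refine ⟨χ.relabel (Sum.elim Fin.elim0 id), ?_⟩
    ext y
    rw [Set.mem_setOf_eq, Set.mem_setOf_eq, FirstOrder.Language.Formula.realize_relabel]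
    have h1 : Sum.elim t y = y ∘ Sum.elim Fin.elim0 id := by
      funext z; rcases z with i | j
      · exact i.elim0
      · rfl
    rw [h1]
  · intro y hy
    exact (hθR y).mp (hsub y hy)
  · intro x hx
    obtain ⟨y, hy, hxy⟩ := hmeets x ((hθR x).mpr hx)
    exact ⟨y, hy, (hεR x y).mp hxy⟩
  · intro y hy
    have := hfin y hy
    apply Set.Finite.subset this
    intro z hz
    exact ⟨hz.1, (hεR y z).mpr hz.2⟩
end
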